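/- arXiv:1008.2789 — 9 statements merged into one kernel-verified Lean document; each statement's English description precedes it below -/
import Mathlib

section
/- Let U ⊆ ℝ^n be open, let f : U → ℝ be C^∞, let a ∈ U and assume m = ord(f;a) < ∞. Let E be a nonempty proper subset of {1,…,n} with complement E^c, and fix α ∈ ℕ^E with |α| = m. Then the polynomial function P : ℝ^{E^c×E} → ℝ defined by P(w) = Σ_{γ∈ℕ^{E^c×E}, |γ|_row ≤ α} [α!/(γ!·(α−|γ|_row)!)] · (∂^{(|γ|_col, α−|γ|_row)} f)(a) · w^γ is not identically zero if and only if there exists β ∈ ℕ^n with |β| = m, ∂^β f(a) ≠ 0, and α_j ≥ β_j for all j ∈ E. -/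
/-- Partial derivative in the `i`-th coordinate. -/
noncomputable def pd {n : ℕ} (i : Fin n) (f : (Fin n → ℝ) → ℝ) : (Fin n → ℝ) → ℝ :=
  fun x => fderiv ℝ f x (Pi.single i 1)

/-- Iterated partial derivative `∂^α` for a multi-index `α : Fin n → ℕ`. -/
noncomputable def md {n : ℕ} (α : Fin n → ℕ) (f : (Fin n → ℝ) → ℝ) : (Fin n → ℝ) → ℝ :=
  (List.finRange n).foldr (fun i g => (pd i)^[α i] g) f


open Finset in
private lemma exists_mat {ι : Type*} [DecidableEq ι] :
    ∀ (N : ℕ) (A B : Finset ι) (r s : ι → ℕ),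
      (∑ i ∈ A, r i = N) → (∑ j ∈ B, s j = N) →
      ∃ γ : ι → ι → ℕ, (∀ i j, i ∉ A ∨ j ∉ B → γ i j = 0) ∧
        (∀ i ∈ A, ∑ j ∈ B, γ i j = r i) ∧ (∀ j ∈ B, ∑ i ∈ A, γ i j = s j) := by
  intro N
  induction N with
  | zero =>
    intro A B r s hr hs
    refine ⟨fun _ _ => 0, fun _ _ _ => rfl, ?_, ?_⟩
    · intro i hi
      simpa using ((Finset.sum_eq_zero_iff).mp hr i hi).symm
    · intro j hj
      simpa using ((Finset.sum_eq_zero_iff).mp hs j hj).symm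
  | succ N ih =>
    intro A B r s hr hs
    have hi0 : ∃ i ∈ A, r i ≠ 0 := by
      by_contra h
      push_neg at h
      have : ∑ i ∈ A, r i = 0 := Finset.sum_eq_zero h
      omega
    have hj0 : ∃ j ∈ B, s j ≠ 0 := by
      by_contra h
      push_neg at h
      have : ∑ j ∈ B, s j = 0 := Finset.sum_eq_zero h
      omega
    obtain ⟨i0, hi0A, hi0⟩ := hi0
    obtain ⟨j0, hj0B, hj0⟩ := hj0
    have hr' : ∑ i ∈ A, Function.update r i0 (r i0 - 1) i = N := by
      rw [Finset.sum_update_of_mem hi0A, ← Finset.erase_eq]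
      have h2 := Finset.add_sum_erase A r hi0A
      omega
    have hs' : ∑ j ∈ B, Function.update s j0 (s j0 - 1) j = N := by
      rw [Finset.sum_update_of_mem hj0B, ← Finset.erase_eq]
      have h2 := Finset.add_sum_erase B s hj0B
      omega
    obtain ⟨γ, hz, hrow, hcol⟩ := ih A B _ _ hr' hs'
    refine ⟨fun i j => γ i j + if i = i0 ∧ j = j0 then 1 else 0, ?_, ?_, ?_⟩
    · intro i j hij
      have h1 := hz i j hij
      have h2 : ¬(i = i0 ∧ j = j0) := by
        rintro ⟨rfl, rfl⟩
        rcases hij with h | h <;> contradiction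
      simp [h1, h2]
    · intro i hi
      rw [Finset.sum_add_distrib, hrow i hi]
      have hite : ∑ j ∈ B, (if i = i0 ∧ j = j0 then 1 else 0) = if i = i0 then 1 else 0 := by
        by_cases h : i = i0
        · subst h
          simp [Finset.sum_ite_eq' B j0 (fun _ => 1), hj0B]
        · simp [h]
      rw [hite]
      by_cases h : i = i0
      · subst h
        rw [Function.update_self, if_pos rfl]
        omega
      · rw [Function.update_of_ne h]
        simp [h]
    · intro j hj
      rw [Finset.sum_add_distrib, hcol j hj]
      have hite : ∑ i ∈ A, (if i = i0 ∧ j = j0 then 1 else 0) = if j = j0 then 1 else 0 := by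
        by_cases h : j = j0
        · subst h
          simp [Finset.sum_ite_eq' A i0 (fun _ => 1), hi0A]
        · simp [h]
      rw [hite]
      by_cases h : j = j0
      · subst h
        rw [Function.update_self, if_pos rfl]
        omega
      · rw [Function.update_of_ne h]
        simp [h]

open Finset MvPolynomial in
private lemma poly_nonzero {n : ℕ} (S : Finset (Fin n → Fin n → ℕ))
    (c : (Fin n → Fin n → ℕ) → ℝ) (γ0 : Fin n → Fin n → ℕ)
    (h0 : γ0 ∈ S) (hc : c γ0 ≠ 0) :
    ∃ w : Fin n → Fin n → ℝ, ∑ γ ∈ S, c γ * ∏ i, ∏ j, w i j ^ γ i j ≠ 0 := by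
  by_contra h
  push_neg at h
  classical
  set u : (Fin n → Fin n → ℕ) → (Fin n × Fin n →₀ ℕ) :=
    fun γ => Finsupp.equivFunOnFinite.symm (fun p => γ p.1 p.2) with hu
  have hu_inj : ∀ γ1 γ2 : Fin n → Fin n → ℕ, u γ1 = u γ2 → γ1 = γ2 := by
    intro γ1 γ2 h12
    have h3 := Finsupp.equivFunOnFinite.symm.injective h12
    funext i j
    exact congrFun h3 (i, j)
  set Q : MvPolynomial (Fin n × Fin n) ℝ := ∑ γ ∈ S, monomial (u γ) (c γ) with hQ
  have heval : ∀ v : Fin n × Fin n → ℝ,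
      eval v Q = ∑ γ ∈ S, c γ * ∏ i, ∏ j, v (i, j) ^ γ i j := by
    intro v
    rw [hQ, map_sum]
    refine Finset.sum_congr rfl fun γ _ => ?_
    rw [eval_monomial]
    congr 1
    rw [Finsupp.prod_fintype _ _ (fun p => pow_zero _), Fintype.prod_prod_type]
    refine Finset.prod_congr rfl fun i _ => Finset.prod_congr rfl fun j _ => ?_
    simp [hu]
  have hQ0 : Q = 0 := by
    apply MvPolynomial.funext
    intro v
    rw [heval v, map_zero]
    exact h (fun i j => v (i, j))
  have hcoeff : coeff (u γ0) Q = c γ0 := by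
    rw [hQ, MvPolynomial.coeff_sum, Finset.sum_eq_single γ0]
    · rw [coeff_monomial, if_pos rfl]
    · intro γ _ hne
      rw [coeff_monomial, if_neg]
      exact fun he => hne (hu_inj _ _ he)
    · intro habs
      exact absurd h0 habs
  exact hc (by rw [← hcoeff, hQ0, coeff_zero])


/-- **Genericity of linear transformations.**  Suppose `f` is `C^∞` on an open `U ⊆ ℝⁿ`,
`a ∈ U`, `ord(f;a) = m < ∞` (expressed by: some derivative of total order `m` is nonzero
at `a`, and all derivatives of total order `< m` vanish at `a`).  Let `E` be a nonempty
proper subset of the coordinates and let `α ∈ ℕ^E` with `|α| = m`.  Then the polynomial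
`P(w) = Σ_{γ : |γ|_row ≤ α} α!/(γ!(α−|γ|_row)!) · ∂^{(|γ|_col, α−|γ|_row)}f(a) · w^γ`
is not identically zero iff there is `β ∈ ℕⁿ` with `|β| = m`, `∂^β f(a) ≠ 0`, and
`α_j ≥ β_j` for all `j ∈ E`. -/
theorem stmt4 {n : ℕ} (U : Set (Fin n → ℝ)) (hU : IsOpen U)
    (f : (Fin n → ℝ) → ℝ) (hf : ContDiffOn ℝ (⊤ : ℕ∞) f U)
    (a : Fin n → ℝ) (ha : a ∈ U) (m : ℕ)
    (hm₁ : ∃ β : Fin n → ℕ, ∑ j, β j = m ∧ md β f a ≠ 0)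
    (hm₂ : ∀ β : Fin n → ℕ, ∑ j, β j < m → md β f a = 0)
    (E : Finset (Fin n)) (hEne : E.Nonempty) (hEproper : E ≠ Finset.univ)
    (α : Fin n → ℕ) (hαsupp : ∀ j ∉ E, α j = 0) (hαsum : ∑ j, α j = m) :
    (∃ w : Fin n → Fin n → ℝ,
      (∑ γ ∈ (Fintype.piFinset fun _ : Fin n =>
              Fintype.piFinset fun j : Fin n => Finset.range (α j + 1)).filter
            (fun γ => (∀ i j, (i ∈ E ∨ j ∉ E) → γ i j = 0) ∧
              ∀ j ∈ E, (∑ i ∈ Eᶜ, γ i j) ≤ α j),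
        (((∏ j ∈ E, (α j).factorial : ℕ) : ℝ) /
            (((∏ i ∈ Eᶜ, ∏ j ∈ E, (γ i j).factorial) *
              ∏ j ∈ E, (α j - ∑ i ∈ Eᶜ, γ i j).factorial : ℕ) : ℝ)) *
          md (fun l => if l ∈ E then α l - ∑ i ∈ Eᶜ, γ i l else ∑ j ∈ E, γ l j) f a *
          ∏ i ∈ Eᶜ, ∏ j ∈ E, w i j ^ γ i j) ≠ 0)
    ↔ ∃ β : Fin n → ℕ, ∑ j, β j = m ∧ md β f a ≠ 0 ∧ ∀ j ∈ E, β j ≤ α j := by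
  classical
  have hEsum : ∑ j ∈ E, α j = m := by
    rw [← hαsum]
    exact Finset.sum_subset (Finset.subset_univ E) fun j _ hj => hαsupp j hj
  constructor
  · rintro ⟨w, hw⟩
    obtain ⟨γ, hγS, hγ⟩ := Finset.exists_ne_zero_of_sum_ne_zero hw
    rw [Finset.mem_filter] at hγS
    obtain ⟨-, hz, hrow⟩ := hγS
    refine ⟨fun l => if l ∈ E then α l - ∑ i ∈ Eᶜ, γ i l else ∑ j ∈ E, γ l j, ?_, ?_, ?_⟩
    · rw [← Finset.sum_add_sum_compl E]
      have h1 : ∑ l ∈ E, (if l ∈ E then α l - ∑ i ∈ Eᶜ, γ i l else ∑ j ∈ E, γ l j)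
          = ∑ l ∈ E, (α l - ∑ i ∈ Eᶜ, γ i l) :=
        Finset.sum_congr rfl fun l hl => if_pos hl
      have h2 : ∑ l ∈ Eᶜ, (if l ∈ E then α l - ∑ i ∈ Eᶜ, γ i l else ∑ j ∈ E, γ l j)
          = ∑ l ∈ Eᶜ, ∑ j ∈ E, γ l j :=
        Finset.sum_congr rfl fun l hl => if_neg (Finset.mem_compl.mp hl)
      rw [h1, h2]
      have h3 : ∑ l ∈ E, ((α l - ∑ i ∈ Eᶜ, γ i l) + ∑ i ∈ Eᶜ, γ i l) = ∑ l ∈ E, α l :=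
        Finset.sum_congr rfl fun l hl => Nat.sub_add_cancel (hrow l hl)
      rw [Finset.sum_add_distrib] at h3
      have h4 : ∑ l ∈ Eᶜ, ∑ j ∈ E, γ l j = ∑ l ∈ E, ∑ i ∈ Eᶜ, γ i l := Finset.sum_comm
      omega
    · exact fun hmd => hγ (by rw [hmd, mul_zero, zero_mul])
    · intro j hj
      simp only [if_pos hj]
      exact Nat.sub_le _ _
  · rintro ⟨β, hβsum, hβne, hβle⟩
    have hsplit : ∑ j ∈ E, β j + ∑ j ∈ Eᶜ, β j = m := by
      rw [Finset.sum_add_sum_compl]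
      exact hβsum
    have hN : ∑ i ∈ Eᶜ, β i = ∑ j ∈ E, (α j - β j) := by
      have h3 : ∑ j ∈ E, ((α j - β j) + β j) = ∑ j ∈ E, α j :=
        Finset.sum_congr rfl fun j hj => Nat.sub_add_cancel (hβle j hj)
      rw [Finset.sum_add_distrib] at h3
      omega
    obtain ⟨γ0, hz, hrow, hcol⟩ :=
      exists_mat (∑ j ∈ E, (α j - β j)) Eᶜ E β (fun j => α j - β j) hN rfl
    have hbound : ∀ i j, γ0 i j ≤ α j := by
      intro i j
      by_cases hi : i ∈ Eᶜ
      · by_cases hj : j ∈ E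
        · calc γ0 i j ≤ ∑ i' ∈ Eᶜ, γ0 i' j :=
                Finset.single_le_sum (f := fun i' => γ0 i' j) (fun _ _ => Nat.zero_le _) hi
            _ = α j - β j := hcol j hj
            _ ≤ α j := Nat.sub_le _ _
        · rw [hz i j (Or.inr hj)]
          exact Nat.zero_le _
      · rw [hz i j (Or.inl hi)]
        exact Nat.zero_le _
    have hmem : γ0 ∈ (Fintype.piFinset fun _ : Fin n =>
        Fintype.piFinset fun j : Fin n => Finset.range (α j + 1)).filter
          (fun γ => (∀ i j, (i ∈ E ∨ j ∉ E) → γ i j = 0) ∧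
            ∀ j ∈ E, (∑ i ∈ Eᶜ, γ i j) ≤ α j) := by
      rw [Finset.mem_filter]
      refine ⟨?_, ?_, ?_⟩
      · rw [Fintype.mem_piFinset]
        intro i
        rw [Fintype.mem_piFinset]
        intro j
        rw [Finset.mem_range, Nat.lt_succ_iff]
        exact hbound i j
      · intro i j hij
        rcases hij with hi | hj
        · exact hz i j (Or.inl (by simp [Finset.mem_compl, hi]))
        · exact hz i j (Or.inr hj)
      · intro j hj
        rw [hcol j hj]
        exact Nat.sub_le _ _
    have hβeq : (fun l => if l ∈ E then α l - ∑ i ∈ Eᶜ, γ0 i l else ∑ j ∈ E, γ0 l j) = β := by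
      funext l
      by_cases hl : l ∈ E
      · rw [if_pos hl, hcol l hl]
        have := hβle l hl
        omega
      · rw [if_neg hl, hrow l (Finset.mem_compl.mpr hl)]
    have hc0 :
        (((∏ j ∈ E, (α j).factorial : ℕ) : ℝ) /
            (((∏ i ∈ Eᶜ, ∏ j ∈ E, (γ0 i j).factorial) *
              ∏ j ∈ E, (α j - ∑ i ∈ Eᶜ, γ0 i j).factorial : ℕ) : ℝ)) *
          md (fun l => if l ∈ E then α l - ∑ i ∈ Eᶜ, γ0 i l else ∑ j ∈ E, γ0 l j) f a ≠ 0 := by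
      apply mul_ne_zero
      · apply div_ne_zero
        · have h1 : 0 < ∏ j ∈ E, (α j).factorial :=
            Finset.prod_pos fun _ _ => Nat.factorial_pos _
          exact Nat.cast_ne_zero.mpr h1.ne'
        · have h1 : 0 < (∏ i ∈ Eᶜ, ∏ j ∈ E, (γ0 i j).factorial) *
              ∏ j ∈ E, (α j - ∑ i ∈ Eᶜ, γ0 i j).factorial :=
            mul_pos (Finset.prod_pos fun _ _ => Finset.prod_pos fun _ _ => Nat.factorial_pos _)
              (Finset.prod_pos fun _ _ => Nat.factorial_pos _)
          exact Nat.cast_ne_zero.mpr h1.ne'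
      · rw [hβeq]
        exact hβne
    obtain ⟨w, hw⟩ := poly_nonzero _
      (fun γ => (((∏ j ∈ E, (α j).factorial : ℕ) : ℝ) /
            (((∏ i ∈ Eᶜ, ∏ j ∈ E, (γ i j).factorial) *
              ∏ j ∈ E, (α j - ∑ i ∈ Eᶜ, γ i j).factorial : ℕ) : ℝ)) *
          md (fun l => if l ∈ E then α l - ∑ i ∈ Eᶜ, γ i l else ∑ j ∈ E, γ l j) f a)
      γ0 hmem hc0
    refine ⟨w, ?_⟩
    have heq : ∀ γ ∈ (Fintype.piFinset fun _ : Fin n =>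
        Fintype.piFinset fun j : Fin n => Finset.range (α j + 1)).filter
          (fun γ => (∀ i j, (i ∈ E ∨ j ∉ E) → γ i j = 0) ∧
            ∀ j ∈ E, (∑ i ∈ Eᶜ, γ i j) ≤ α j),
        ∏ i ∈ Eᶜ, ∏ j ∈ E, w i j ^ γ i j = ∏ i, ∏ j, w i j ^ γ i j := by
      intro γ hγ
      rw [Finset.mem_filter] at hγ
      obtain ⟨-, hzz, -⟩ := hγ
      have hin : ∀ i, ∏ j ∈ E, w i j ^ γ i j = ∏ j, w i j ^ γ i j := fun i =>
        Finset.prod_subset (Finset.subset_univ E) fun j _ hj => by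
          rw [hzz i j (Or.inr hj), pow_zero]
      calc ∏ i ∈ Eᶜ, ∏ j ∈ E, w i j ^ γ i j
          = ∏ i ∈ Eᶜ, ∏ j, w i j ^ γ i j := Finset.prod_congr rfl fun i _ => hin i
        _ = ∏ i, ∏ j, w i j ^ γ i j := by
            refine Finset.prod_subset (Finset.subset_univ Eᶜ) fun i _ hi => ?_
            refine Finset.prod_eq_one fun j _ => ?_
            rw [hzz i j (Or.inl (by simpa using hi)), pow_zero]
    calc (∑ γ ∈ (Fintype.piFinset fun _ : Fin n =>
              Fintype.piFinset fun j : Fin n => Finset.range (α j + 1)).filter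
            (fun γ => (∀ i j, (i ∈ E ∨ j ∉ E) → γ i j = 0) ∧
              ∀ j ∈ E, (∑ i ∈ Eᶜ, γ i j) ≤ α j),
        (((∏ j ∈ E, (α j).factorial : ℕ) : ℝ) /
            (((∏ i ∈ Eᶜ, ∏ j ∈ E, (γ i j).factorial) *
              ∏ j ∈ E, (α j - ∑ i ∈ Eᶜ, γ i j).factorial : ℕ) : ℝ)) *
          md (fun l => if l ∈ E then α l - ∑ i ∈ Eᶜ, γ i l else ∑ j ∈ E, γ l j) f a *
          ∏ i ∈ Eᶜ, ∏ j ∈ E, w i j ^ γ i j)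
        = ∑ γ ∈ (Fintype.piFinset fun _ : Fin n =>
              Fintype.piFinset fun j : Fin n => Finset.range (α j + 1)).filter
            (fun γ => (∀ i j, (i ∈ E ∨ j ∉ E) → γ i j = 0) ∧
              ∀ j ∈ E, (∑ i ∈ Eᶜ, γ i j) ≤ α j),
        (((∏ j ∈ E, (α j).factorial : ℕ) : ℝ) /
            (((∏ i ∈ Eᶜ, ∏ j ∈ E, (γ i j).factorial) *
              ∏ j ∈ E, (α j - ∑ i ∈ Eᶜ, γ i j).factorial : ℕ) : ℝ)) *
          md (fun l => if l ∈ E then α l - ∑ i ∈ Eᶜ, γ i l else ∑ j ∈ E, γ l j) f a *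
          ∏ i, ∏ j, w i j ^ γ i j := by
          refine Finset.sum_congr rfl fun γ hγ => ?_
          rw [heq γ hγ]
      _ ≠ 0 := hw
end

section
/- Let U ⊆ ℝ^n be open, let i ∈ {1,…,n}, and let p, d ∈ ℕ. Suppose f : U → ℝ is C^{p+d} and that for every j ∈ {0,…,d−1} and every x ∈ U with x_i = 0 one has ∂^j f/∂x_i^j (x) = 0. Let g : U → ℝ be a C^p function satisfying f(x) = x_i^d · g(x) for all x ∈ U. Then for every multi-index α ∈ ℕ^n with |α| ≤ p and every x ∈ U with x_i = 0: (1/α_i!) · ∂^α g(x) = (1/(α_i+d)!) · ∂^{α+d·e_i} f(x), where e_i is the i-th standard unit multi-index in ℕ^n. -/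
/-!
Along the line through `x` in direction `eᵢ`, `f = t ^ d * g`. The Taylor polynomials of `f`
(order `m + d`) and `g` (order `m`) at `0` therefore satisfy `T_f - t ^ d * T_g = o(t ^ (m + d))`,
so the top coefficient of this polynomial vanishes: this is the case `α = m • eᵢ`. For the
general case, `∂^α` applies the coordinates `j > i` first and `j < i` last; derivatives in the
first group commute with multiplication by `x_i ^ d`, and those in the second group preserve
identities on the hyperplane `x_i = 0`.
-/

open Polynomial Asymptotics Filter Topology
open scoped Nat

theorem Polynomial.coeff_zero_eq_zero_of_isLittleO_pow {P : ℝ[X]} {N : ℕ}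
    (hP : (fun t => P.eval t) =o[𝓝[≠] 0] fun t => t ^ N) : P.coeff 0 = 0 := by
  have hlim : Tendsto (fun t => P.eval t) (𝓝[≠] 0) (𝓝 (P.coeff 0)) := by
    rw [coeff_zero_eq_eval_zero]
    exact P.continuous.continuousAt.tendsto.mono_left nhdsWithin_le_nhds
  have hpow : (fun t : ℝ => t ^ N) =O[𝓝[≠] 0] fun _ => (1 : ℝ) :=
    ((continuous_pow N).tendsto 0).isBigO_one ℝ |>.mono nhdsWithin_le_nhds
  exact tendsto_nhds_unique hlim (isLittleO_one_iff ℝ |>.mp (hP.trans_isBigO hpow))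

theorem Polynomial.coeff_eq_zero_of_isLittleO_pow {P : ℝ[X]} {N : ℕ}
    (hP : (fun t => P.eval t) =o[𝓝[≠] 0] fun t => t ^ N) : ∀ j ≤ N, P.coeff j = 0 := by
  induction N generalizing P with
  | zero => simpa using coeff_zero_eq_zero_of_isLittleO_pow hP
  | succ N ih =>
    have hP0 := coeff_zero_eq_zero_of_isLittleO_pow hP
    have hX : ∀ t, P.eval t = t * P.divX.eval t := fun t => by
      conv_lhs => rw [← X_mul_divX_add P, hP0]
      simp
    have hdivX : (fun t => P.divX.eval t) =o[𝓝[≠] 0] fun t => t ^ N := by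
      refine ((isBigO_refl (fun t : ℝ => t⁻¹) _).mul_isLittleO hP).congr' ?_ ?_ <;>
        filter_upwards [self_mem_nhdsWithin] with t (ht : t ≠ 0)
      · rw [hX, inv_mul_cancel_left₀ ht]
      · rw [pow_succ', inv_mul_cancel_left₀ ht]
    rintro (_ | j) hj
    · exact hP0
    · rw [← coeff_divX]
      exact ih hdivX j (by omega)

noncomputable def taylorPolyAtZero (h : ℝ → ℝ) (k : ℕ) : ℝ[X] :=
  ∑ j ∈ Finset.range (k + 1), C (iteratedDeriv j h 0 / j !) * X ^ j

theorem taylorPolyAtZero_coeff (h : ℝ → ℝ) {j k : ℕ} (hj : j ≤ k) :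
    (taylorPolyAtZero h k).coeff j = iteratedDeriv j h 0 / j ! := by
  simp [taylorPolyAtZero, Nat.lt_succ_of_le hj]

theorem isLittleO_sub_taylorPolyAtZero {s : Set ℝ} (hs : IsOpen s) (h0 : (0 : ℝ) ∈ s) {h : ℝ → ℝ}
    {k : ℕ} (hh : ContDiffOn ℝ k h s) :
    (fun t => h t - (taylorPolyAtZero h k).eval t) =o[𝓝 0] fun t => t ^ k := by
  -- `taylor_isLittleO` needs a convex domain, so pass to a ball around `0` inside `s`.
  obtain ⟨ε, hε, hball⟩ := Metric.isOpen_iff.mp hs 0 h0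
  have h0ε : (0 : ℝ) ∈ Metric.ball 0 ε := Metric.mem_ball_self hε
  have hT := taylor_isLittleO (convex_ball (0 : ℝ) ε) h0ε (hh.mono hball)
  have hpoly : ∀ t,
      taylorWithinEval h k (Metric.ball 0 ε) 0 t = (taylorPolyAtZero h k).eval t := by
    intro t
    rw [taylor_within_apply, taylorPolyAtZero, eval_finsetSum]
    refine Finset.sum_congr rfl fun j _ => ?_
    rw [iteratedDerivWithin_of_isOpen Metric.isOpen_ball h0ε]
    simp only [sub_zero, smul_eq_mul, eval_mul, eval_C, eval_pow, eval_X]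
    ring
  simpa only [hpoly, sub_zero, Metric.isOpen_ball.nhdsWithin_eq h0ε] using hT

theorem iteratedDeriv_div_factorial_eq_of_eq_pow_mul {s : Set ℝ} (hs : IsOpen s)
    (h0 : (0 : ℝ) ∈ s) {m d : ℕ} {f g : ℝ → ℝ} (hf : ContDiffOn ℝ (m + d : ℕ) f s)
    (hg : ContDiffOn ℝ m g s)
    (hfg : ∀ t ∈ s, f t = t ^ d * g t) :
    iteratedDeriv m g 0 / m ! = iteratedDeriv (m + d) f 0 / (m + d)! := by
  set D := taylorPolyAtZero f (m + d) - X ^ d * taylorPolyAtZero g m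
  have hD : (fun t => D.eval t) =o[𝓝 0] fun t => t ^ (m + d) := by
    have hg' : (fun t => t ^ d * (g t - (taylorPolyAtZero g m).eval t)) =o[𝓝 0]
        fun t => t ^ (m + d) := by
      simpa only [← pow_add, add_comm d m] using (isBigO_refl (fun t : ℝ => t ^ d) _).mul_isLittleO
        (isLittleO_sub_taylorPolyAtZero hs h0 hg)
    refine (hg'.sub (isLittleO_sub_taylorPolyAtZero hs h0 hf)).congr' ?_ ?_
    · filter_upwards [hs.mem_nhds h0] with t ht
      simp only [D, eval_sub, eval_mul, eval_pow, eval_X, hfg t ht]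
      ring
    · exact .of_forall fun t => by ring
  have hcoeff := coeff_eq_zero_of_isLittleO_pow (hD.mono nhdsWithin_le_nhds) (m + d) le_rfl
  rw [coeff_sub, coeff_X_pow_mul, taylorPolyAtZero_coeff _ le_rfl,
    taylorPolyAtZero_coeff _ le_rfl, sub_eq_zero] at hcoeff
  exact hcoeff.symm

section Multivariate

variable {n : ℕ} {U : Set (Fin n → ℝ)}

theorem contDiffOn_pd (hU : IsOpen U) (i : Fin n) {m k : WithTop ℕ∞} {f : (Fin n → ℝ) → ℝ}
    (hf : ContDiffOn ℝ k f U) (hmk : m + 1 ≤ k) : ContDiffOn ℝ m (pd i f) U :=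
  (hf.fderiv_of_isOpen hU hmk).clm_apply contDiffOn_const

theorem contDiffOn_iterate_pd (hU : IsOpen U) (i : Fin n) {m : WithTop ℕ∞} (k : ℕ)
    {f : (Fin n → ℝ) → ℝ} (hf : ContDiffOn ℝ (m + k) f U) : ContDiffOn ℝ m ((pd i)^[k] f) U := by
  induction k generalizing f with
  | zero => simpa using hf
  | succ k ih =>
    rw [Function.iterate_succ_apply]
    exact ih (contDiffOn_pd hU i hf (by push_cast; rw [add_assoc]))

theorem hasDerivAt_pd_line (i : Fin n) {f : (Fin n → ℝ) → ℝ} {x : Fin n → ℝ} {t : ℝ}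
    (hf : DifferentiableAt ℝ f (x + t • Pi.single i 1)) :
    HasDerivAt (fun s => f (x + s • Pi.single i 1)) (pd i f (x + t • Pi.single i 1)) t := by
  have hline : HasDerivAt (fun s : ℝ => x + s • Pi.single i (1 : ℝ)) (Pi.single i 1) t := by
    simpa using ((hasDerivAt_id t).smul_const (Pi.single i (1 : ℝ))).const_add x
  exact hf.hasFDerivAt.comp_hasDerivAt t hline

def CoordLinearRel (U : Set (Fin n → ℝ)) (i : Fin n) (P : ℝ → Prop) (a b : ℝ → ℝ)
    (v w : (Fin n → ℝ) → ℝ) : Prop :=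
  ∀ x ∈ U, P (x i) → a (x i) * v x = b (x i) * w x

namespace CoordLinearRel

variable {i j : Fin n} {P : ℝ → Prop} {a b : ℝ → ℝ} {v w : (Fin n → ℝ) → ℝ}

/-- Along the lines `x + s • eⱼ` the coordinate `x i` is constant, so the relation holds
identically in `s` near `0` and can be differentiated. -/
theorem pd (hU : IsOpen U) (hij : j ≠ i) (hv : DifferentiableOn ℝ v U)
    (hw : DifferentiableOn ℝ w U) (h : CoordLinearRel U i P a b v w) :
    CoordLinearRel U i P a b (pd j v) (pd j w) := by
  intro x hx hPx
  have hline : ∀ s : ℝ, (x + s • Pi.single j (1 : ℝ) : Fin n → ℝ) i = x i := fun s => by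
    simp [hij.symm]
  have hev : ∀ᶠ s : ℝ in 𝓝 0, a (x i) * v (x + s • Pi.single j (1 : ℝ))
      = b (x i) * w (x + s • Pi.single j (1 : ℝ)) := by
    have hcont : Continuous fun s : ℝ => x + s • Pi.single j (1 : ℝ) := by fun_prop
    filter_upwards [hcont.continuousAt.preimage_mem_nhds (by simpa using hU.mem_nhds hx)]
      with s hs
    simpa only [hline] using h _ hs (by simpa only [hline])
  have hderiv : ∀ u : (Fin n → ℝ) → ℝ, DifferentiableOn ℝ u U →
      HasDerivAt (fun s : ℝ => u (x + s • Pi.single j (1 : ℝ))) (_root_.pd j u x) 0 := by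
    intro u hu
    simpa using hasDerivAt_pd_line j (x := x) (t := 0)
      (by simpa using hu.differentiableAt (hU.mem_nhds hx))
  exact ((hderiv v hv).const_mul _).unique
    (((hderiv w hw).const_mul _).congr_of_eventuallyEq hev)

theorem iterate_pd (hU : IsOpen U) (hij : j ≠ i) (k : ℕ) (hv : ContDiffOn ℝ k v U)
    (hw : ContDiffOn ℝ k w U) (h : CoordLinearRel U i P a b v w) :
    CoordLinearRel U i P a b ((_root_.pd j)^[k] v) ((_root_.pd j)^[k] w) := by
  induction k generalizing v w with
  | zero => exact h
  | succ k ih =>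
    have hk : (k : WithTop ℕ∞) + 1 ≤ (k + 1 : ℕ) := by norm_cast
    exact ih (contDiffOn_pd hU j hv hk) (contDiffOn_pd hU j hw hk)
      (h.pd hU hij (hv.differentiableOn (by simp)) (hw.differentiableOn (by simp)))

end CoordLinearRel

noncomputable def mdList (l : List (Fin n)) (α : Fin n → ℕ) (f : (Fin n → ℝ) → ℝ) :
    (Fin n → ℝ) → ℝ :=
  l.foldr (fun i g => (pd i)^[α i] g) f

theorem mdList_congr {l : List (Fin n)} {α β : Fin n → ℕ} (h : ∀ j ∈ l, α j = β j)
    (f : (Fin n → ℝ) → ℝ) : mdList l α f = mdList l β f := by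
  induction l with
  | nil => rfl
  | cons j l ih =>
    simp only [mdList, List.foldr_cons] at ih ⊢
    rw [h j (by simp), ih fun k hk => h k (by simp [hk])]

theorem md_eq_mdList_append_cons {l₁ l₂ : List (Fin n)} {i : Fin n}
    (h : List.finRange n = l₁ ++ i :: l₂) (α : Fin n → ℕ) (f : (Fin n → ℝ) → ℝ) :
    md α f = mdList l₁ α ((pd i)^[α i] (mdList l₂ α f)) := by
  rw [md, h, List.foldr_append]
  rfl

theorem contDiffOn_mdList (hU : IsOpen U) (l : List (Fin n)) (α : Fin n → ℕ) {m : WithTop ℕ∞}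
    {f : (Fin n → ℝ) → ℝ} (hf : ContDiffOn ℝ (m + (l.map α).sum) f U) :
    ContDiffOn ℝ m (mdList l α f) U := by
  induction l generalizing m with
  | nil => simpa [mdList] using hf
  | cons j l ih =>
    refine contDiffOn_iterate_pd hU j (α j) (ih ?_)
    simpa [add_assoc, add_comm (α j : WithTop ℕ∞)] using hf

theorem CoordLinearRel.mdList (hU : IsOpen U) {i : Fin n} {l : List (Fin n)} (hl : i ∉ l)
    {α : Fin n → ℕ} {P : ℝ → Prop} {a b : ℝ → ℝ} {v w : (Fin n → ℝ) → ℝ}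
    (hv : ContDiffOn ℝ (l.map α).sum v U) (hw : ContDiffOn ℝ (l.map α).sum w U)
    (h : CoordLinearRel U i P a b v w) :
    CoordLinearRel U i P a b (_root_.mdList l α v) (_root_.mdList l α w) := by
  induction l with
  | nil => exact h
  | cons j l ih =>
    rw [List.mem_cons, not_or] at hl
    have hv' : ContDiffOn ℝ (α j + (l.map α).sum : ℕ) v U := by simpa using hv
    have hw' : ContDiffOn ℝ (α j + (l.map α).sum : ℕ) w U := by simpa using hw
    refine CoordLinearRel.iterate_pd hU (Ne.symm hl.1) (α j) ?_ ?_
      (ih hl.2 (hv'.of_le (by simp)) (hw'.of_le (by simp)))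
    · exact contDiffOn_mdList hU l α (by exact_mod_cast hv')
    · exact contDiffOn_mdList hU l α (by exact_mod_cast hw')

theorem iteratedDeriv_comp_line (hU : IsOpen U) (i : Fin n) {k : ℕ} {F : (Fin n → ℝ) → ℝ}
    (hF : ContDiffOn ℝ k F U) (x : Fin n → ℝ) {j : ℕ} (hj : j ≤ k) {t : ℝ}
    (ht : x + t • Pi.single i (1 : ℝ) ∈ U) :
    iteratedDeriv j (fun s : ℝ => F (x + s • Pi.single i (1 : ℝ))) t
      = (pd i)^[j] F (x + t • Pi.single i (1 : ℝ)) := by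
  induction j generalizing t with
  | zero => simp
  | succ j ih =>
    have hline : Continuous fun s : ℝ => x + s • Pi.single i (1 : ℝ) := by fun_prop
    have hev : iteratedDeriv j (fun s : ℝ => F (x + s • Pi.single i (1 : ℝ)))
        =ᶠ[𝓝 t] fun s => (pd i)^[j] F (x + s • Pi.single i (1 : ℝ)) := by
      filter_upwards [hline.continuousAt.preimage_mem_nhds (hU.mem_nhds ht)] with s hs
      exact ih (by omega) hs
    have hdiff : DifferentiableOn ℝ ((pd i)^[j] F) U :=
      (contDiffOn_iterate_pd hU i j (m := 1) (hF.of_le (by norm_cast; omega))).differentiableOn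
        one_ne_zero
    rw [iteratedDeriv_succ, Function.iterate_succ_apply',
      ((hasDerivAt_pd_line i (hdiff.differentiableAt (hU.mem_nhds ht))).congr_of_eventuallyEq
        hev).deriv]

theorem iterate_pd_div_factorial_eq_of_eq_pow_mul (hU : IsOpen U) (i : Fin n) {m d : ℕ}
    {F G : (Fin n → ℝ) → ℝ} (hF : ContDiffOn ℝ (m + d : ℕ) F U) (hG : ContDiffOn ℝ m G U)
    (hFG : ∀ x ∈ U, F x = x i ^ d * G x) {x : Fin n → ℝ} (hx : x ∈ U) (hxi : x i = 0) :
    (pd i)^[m] G x / m ! = (pd i)^[m + d] F x / (m + d)! := by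
  let line : ℝ → Fin n → ℝ := fun s => x + s • Pi.single i (1 : ℝ)
  have hline : ContDiff ℝ ⊤ line := by fun_prop
  have hs : IsOpen (line ⁻¹' U) := hU.preimage hline.continuous
  have h0 : (0 : ℝ) ∈ line ⁻¹' U := by simpa [line] using hx
  have hcoord : ∀ s, line s i = s := fun s => by simp [line, hxi]
  have key : iteratedDeriv m (fun s => G (line s)) 0 / m !
      = iteratedDeriv (m + d) (fun s => F (line s)) 0 / (m + d)! :=
    iteratedDeriv_div_factorial_eq_of_eq_pow_mul hs h0
      (hF.comp (hline.of_le le_top).contDiffOn fun _ h => h)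
      (hG.comp (hline.of_le le_top).contDiffOn fun _ h => h)
      (fun s hs => by simpa only [Function.comp, hcoord] using hFG _ hs)
  rwa [iteratedDeriv_comp_line hU i hF x le_rfl h0, iteratedDeriv_comp_line hU i hG x le_rfl h0,
    zero_smul, add_zero] at key

end Multivariate

theorem stmt5_general {n : ℕ} (U : Set (Fin n → ℝ)) (hU : IsOpen U) (i : Fin n) (p d : ℕ)
    (f g : (Fin n → ℝ) → ℝ)
    (hf : ContDiffOn ℝ (p + d : ℕ) f U)
    (hg : ContDiffOn ℝ (p : ℕ) g U)
    (hfg : ∀ x ∈ U, f x = x i ^ d * g x)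
    (α : Fin n → ℕ) (hα : ∑ j, α j ≤ p)
    (x : Fin n → ℝ) (hx : x ∈ U) (hxi : x i = 0) :
    (1 / ((α i).factorial : ℝ)) * md α g x
      = (1 / ((α i + d).factorial : ℝ)) * md (α + Pi.single i d) f x := by
  obtain ⟨A, B, hAB⟩ := List.append_of_mem (List.mem_finRange i)
  have hnodup := List.nodup_finRange n
  rw [hAB, List.nodup_append, List.nodup_cons] at hnodup
  have hiA : i ∉ A := fun h => hnodup.2.2 i h i List.mem_cons_self rfl
  have hiB : i ∉ B := hnodup.2.1.1
  have hsum : (A.map α).sum + α i + (B.map α).sum ≤ p := by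
    simpa [Fin.sum_univ_def, hAB, add_assoc] using hα
  have hinner : CoordLinearRel U i (fun _ => True) (fun _ => 1) (· ^ d)
      (mdList B α f) (mdList B α g) :=
    CoordLinearRel.mdList hU hiB (hf.of_le (by norm_cast; omega))
      (hg.of_le (by norm_cast; omega)) fun y hy _ => by rw [one_mul, hfg y hy]
  have hslice : CoordLinearRel U i (· = 0) (fun _ => 1 / (α i)!) (fun _ => 1 / (α i + d)!)
      ((pd i)^[α i] (mdList B α g)) ((pd i)^[α i + d] (mdList B α f)) := fun y hy hyi => by
    simpa only [one_div_mul_eq_div] using iterate_pd_div_factorial_eq_of_eq_pow_mul hU i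
      (contDiffOn_mdList hU B α (hf.of_le (by norm_cast; omega)))
      (contDiffOn_mdList hU B α (hg.of_le (by norm_cast; omega)))
      (fun z hz => by simpa using hinner z hz trivial) hy hyi
  have houter := hslice.mdList hU hiA (α := α)
    (contDiffOn_iterate_pd hU i (m := ((A.map α).sum : ℕ)) (α i)
      (contDiffOn_mdList hU B α (hg.of_le (by exact_mod_cast hsum))))
    (contDiffOn_iterate_pd hU i (m := ((A.map α).sum : ℕ)) (α i + d)
      (contDiffOn_mdList hU B α (hf.of_le (by norm_cast; omega))))
  have hoff : ∀ j ≠ i, (α + Pi.single i d : Fin n → ℕ) j = α j := fun j hj => by simp [hj]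
  rw [md_eq_mdList_append_cons hAB, md_eq_mdList_append_cons hAB,
    mdList_congr fun j hj => hoff j (ne_of_mem_of_not_mem hj hiA),
    mdList_congr fun j hj => hoff j (ne_of_mem_of_not_mem hj hiB)]
  simpa using houter x hx hxi

/-- **Derivatives after dividing by a power of a variable.**
Let `f : U → ℝ` be `C^{p+d}` on the open set `U ⊆ ℝⁿ` with
`∂^j f/∂x_i^j (x) = 0` for all `j < d` and all `x ∈ U` with `x_i = 0`, and let `g` be a `C^p`
function on `U` with `f(x) = x_i^d · g(x)` on `U`.  Then for every multi-index `α` with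
`|α| ≤ p` and every `x ∈ U` with `x_i = 0`:
`(1/α_i!)·∂^α g(x) = (1/(α_i+d)!)·∂^{α+d·e_i} f(x)`. -/
theorem stmt5 {n : ℕ} (U : Set (Fin n → ℝ)) (hU : IsOpen U) (i : Fin n) (p d : ℕ)
    (f g : (Fin n → ℝ) → ℝ)
    (hf : ContDiffOn ℝ (p + d : ℕ) f U)
    (hvan : ∀ j < d, ∀ x ∈ U, x i = 0 → (pd i)^[j] f x = 0)
    (hg : ContDiffOn ℝ (p : ℕ) g U)
    (hfg : ∀ x ∈ U, f x = x i ^ d * g x)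
    (α : Fin n → ℕ) (hα : ∑ j, α j ≤ p)
    (x : Fin n → ℝ) (hx : x ∈ U) (hxi : x i = 0) :
    (1 / ((α i).factorial : ℝ)) * md α g x
      = (1 / ((α i + d).factorial : ℝ)) * md (α + Pi.single i d) f x :=
  stmt5_general U hU i p d f g hf hg hfg α hα x hx hxi
end

section
/- Let U ⊆ ℝ^n be open, let I ⊆ {1,…,n} be nonempty, suppose C = {x ∈ U : x_j = 0 for all j ∈ I} is nonempty, let i ∈ I, let π_i = π_{I,i} be the i-th standard blowup chart and U_i = π_i^{-1}(U). If f : U → ℝ is real-analytic, then inf{ord(f∘π_i; y) : y ∈ U_i, y_i = 0} = inf{ord(f;x) : x ∈ C}, as elements of ℕ ∪ {∞}. -/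
/-- The order of `f` at `a`: `ord(f;a) = inf{|α| : ∂^α f(a) ≠ 0} ∈ ℕ ∪ {∞}`. -/
noncomputable def ordAt {n : ℕ} (f : (Fin n → ℝ) → ℝ) (a : Fin n → ℝ) : ℕ∞ :=
  sInf {k : ℕ∞ | ∃ α : Fin n → ℕ, md α f a ≠ 0 ∧ ((∑ j, α j : ℕ) : ℕ∞) = k}

/-- The `i`-th standard chart of the blowing-up of `ℝⁿ` with center `{x : x_I = 0}`. -/
def blowChart {n : ℕ} (I : Finset (Fin n)) (i : Fin n) (y : Fin n → ℝ) : Fin n → ℝ :=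
  fun j => if j ∈ I ∧ j ≠ i then y i * y j else y j

/-!
For analytic `f`, `m ≤ ord(f;a)` iff `D^k f(a) = 0` for all `k < m`, iff `f(a + h) = O(‖h‖^m)`.
The last form survives composition with a differentiable map, so `ord(f; π y) ≤ ord(f ∘ π; y)`,
and the points `π y` with `y_i = 0` lie in `C`.
Conversely, let `x₀ ∈ C` and let `w` be a direction with `w_i ≠ 0`. Then some `y` with `y_i = 0`
and some `u` satisfy `π (y + s u) = x₀ + s w` for all `s`, so
`D^k f(x₀)(w,…,w) = D^k (f ∘ π)(y)(u,…,u)`, which vanishes when `k` is below the order of `f ∘ π`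
along the exceptional divisor. Such `w` are dense, and a symmetric multilinear map vanishing on
the diagonal is zero, so `D^k f(x₀) = 0`.
-/

open Filter Asymptotics Topology
open scoped ContDiff

section Polarization

variable {𝕜 : Type*} [NontriviallyNormedField 𝕜] [CharZero 𝕜]
  {E F : Type*} [NormedAddCommGroup E] [NormedSpace 𝕜 E] [NormedAddCommGroup F] [NormedSpace 𝕜 F]

theorem ContinuousMultilinearMap.eq_zero_of_forall_diag {k : ℕ} (T : E [×k]→L[𝕜] F)
    (hT : ∀ (v : Fin k → E) (σ : Equiv.Perm (Fin k)), T (v ∘ σ) = T v)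
    (h : ∀ w, T (fun _ => w) = 0) : T = 0 := by
  -- Differentiating `w ↦ T (w, …, w)` `k` times gives `∑ σ, T (v ∘ σ) = k! • T v`.
  ext v
  have hsum := T.iteratedFDeriv_comp_diagonal 0 v
  simp only [Function.comp_def] at hT
  simp only [funext h, iteratedFDeriv_fun_zero, Pi.zero_apply, zero_apply, hT,
    Finset.sum_const, Finset.card_univ, Fintype.card_perm, Fintype.card_fin] at hsum
  rw [← Nat.cast_smul_eq_nsmul 𝕜] at hsum
  exact (smul_eq_zero.1 hsum.symm).resolve_left (Nat.cast_ne_zero.2 k.factorial_ne_zero)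

theorem ContDiffAt.iteratedFDeriv_eq_zero_iff_forall_diag {f : E → F} {x : E}
    (hf : ContDiffAt 𝕜 ω f x) (k : ℕ) :
    iteratedFDeriv 𝕜 k f x = 0 ↔ ∀ w, iteratedFDeriv 𝕜 k f x (fun _ => w) = 0 :=
  ⟨fun h w => by rw [h]; rfl,
    (iteratedFDeriv 𝕜 k f x).eq_zero_of_forall_diag hf.iteratedFDeriv_comp_perm⟩

end Polarization

section PowerSeries

variable {𝕜 : Type*} [NontriviallyNormedField 𝕜]
  {E F : Type*} [NormedAddCommGroup E] [NormedSpace 𝕜 E] [NormedAddCommGroup F] [NormedSpace 𝕜 F]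

theorem isBigO_norm_pow_pow {k m : ℕ} (hkm : k ≤ m) :
    (fun y : E => ‖y‖ ^ m) =O[𝓝 0] fun y => ‖y‖ ^ k := by
  rcases hkm.eq_or_lt with rfl | hlt
  · exact isBigO_refl _ _
  · exact (isLittleO_pow_pow hlt).isBigO.comp_tendsto tendsto_norm_zero

theorem HasFPowerSeriesAt.isBigO_pow_iff {p : FormalMultilinearSeries 𝕜 E F} {f : E → F} {a : E}
    (hp : HasFPowerSeriesAt f p a) (m : ℕ) :
    (fun h => f (a + h)) =O[𝓝 0] (fun h => ‖h‖ ^ m) ↔ ∀ k < m, ∀ w, p k (fun _ => w) = 0 := by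
  constructor
  · intro hO k
    induction k using Nat.strong_induction_on with
    | _ k ih =>
      intro hk
      have hsum : p.partialSum (k + 1) = fun y => p k fun _ => y := by
        funext y
        rw [FormalMultilinearSeries.partialSum, Finset.sum_range_succ,
          Finset.sum_eq_zero fun j hj => ih j (Finset.mem_range.1 hj)
            ((Finset.mem_range.1 hj).trans hk) y, zero_add]
      have hk' : (fun y => p k fun _ => y) =O[𝓝 0] fun y => ‖y‖ ^ (k + 1) := by
        rw [← hsum]
        simpa using (hO.trans (isBigO_norm_pow_pow hk)).sub (hp.isBigO_sub_partialSum_pow (k + 1))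
      exact hk'.continuousMultilinearMap_apply_eq_zero
  · intro h
    have hsum : p.partialSum m = 0 := by
      funext y
      exact Finset.sum_eq_zero fun k hk => h k (Finset.mem_range.1 hk) y
    simpa [hsum] using hp.isBigO_sub_partialSum_pow m

theorem HasFPowerSeriesOnBall.apply_diag_eq_zero_iff [CharZero 𝕜] [CompleteSpace F]
    {p : FormalMultilinearSeries 𝕜 E F} {f : E → F} {a : E} {r : ENNReal}
    (hp : HasFPowerSeriesOnBall f p a r) (k : ℕ) (w : E) :
    p k (fun _ => w) = 0 ↔ iteratedFDeriv 𝕜 k f a (fun _ => w) = 0 := by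
  rw [← hp.factorial_smul w k, ← Nat.cast_smul_eq_nsmul 𝕜, smul_eq_zero,
    or_iff_right (Nat.cast_ne_zero.2 k.factorial_ne_zero)]

theorem AnalyticAt.isBigO_pow_iff [CharZero 𝕜] [CompleteSpace F] {f : E → F} {a : E}
    (hf : AnalyticAt 𝕜 f a) (m : ℕ) :
    (fun h => f (a + h)) =O[𝓝 0] (fun h => ‖h‖ ^ m) ↔
      ∀ k < m, ∀ w, iteratedFDeriv 𝕜 k f a (fun _ => w) = 0 := by
  obtain ⟨p, r, hp⟩ := hf
  simp only [hp.hasFPowerSeriesAt.isBigO_pow_iff, hp.apply_diag_eq_zero_iff]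

end PowerSeries

section IteratedDirDeriv

variable (𝕜 : Type*) [NontriviallyNormedField 𝕜]
  {E F : Type*} [NormedAddCommGroup E] [NormedSpace 𝕜 E] [NormedAddCommGroup F] [NormedSpace 𝕜 F]

noncomputable def iteratedDirDeriv (vs : List E) (f : E → F) : E → F :=
  vs.foldr (fun v g x => fderiv 𝕜 g x v) f

variable {𝕜}

theorem iteratedDirDeriv_cons (v : E) (vs : List E) (f : E → F) (x : E) :
    iteratedDirDeriv 𝕜 (v :: vs) f x = fderiv 𝕜 (iteratedDirDeriv 𝕜 vs f) x v := rfl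

theorem iteratedDirDeriv_append (l₁ l₂ : List E) (f : E → F) :
    iteratedDirDeriv 𝕜 (l₁ ++ l₂) f = iteratedDirDeriv 𝕜 l₁ (iteratedDirDeriv 𝕜 l₂ f) := by
  simp [iteratedDirDeriv, List.foldr_append]

variable [CompleteSpace F] {f : E → F}

theorem AnalyticAt.iteratedDirDeriv {x : E} (hf : AnalyticAt 𝕜 f x) (vs : List E) :
    AnalyticAt 𝕜 (iteratedDirDeriv 𝕜 vs f) x := by
  induction vs with
  | nil => exact hf
  | cons v vs ih => exact (ContinuousLinearMap.apply 𝕜 F v).analyticAt _ |>.comp ih.fderiv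

theorem iteratedDirDeriv_swap {x : E} (hf : AnalyticAt 𝕜 f x) (v w : E) (vs : List E) :
    iteratedDirDeriv 𝕜 (v :: w :: vs) f x = iteratedDirDeriv 𝕜 (w :: v :: vs) f x := by
  have hg := hf.iteratedDirDeriv vs
  have hsecond : ∀ u z : E, iteratedDirDeriv 𝕜 (u :: z :: vs) f x
      = fderiv 𝕜 (fderiv 𝕜 (iteratedDirDeriv 𝕜 vs f)) x u z := fun u z => by
    change fderiv 𝕜 (fun y => fderiv 𝕜 (iteratedDirDeriv 𝕜 vs f) y z) x u = _
    simp [fderiv_clm_apply hg.fderiv.differentiableAt (differentiableAt_const z)]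
  rw [hsecond, hsecond]
  exact hg.contDiffAt.isSymmSndFDerivAt_of_omega v w

theorem List.Perm.iteratedDirDeriv_eq {l₁ l₂ : List E} (hp : l₁.Perm l₂) {x : E}
    (hf : AnalyticAt 𝕜 f x) : iteratedDirDeriv 𝕜 l₁ f x = iteratedDirDeriv 𝕜 l₂ f x := by
  induction hp generalizing x with
  | nil => rfl
  | cons v _ ih =>
    have heq : iteratedDirDeriv 𝕜 _ f =ᶠ[𝓝 x] iteratedDirDeriv 𝕜 _ f :=
      hf.eventually_analyticAt.mono fun y hy => ih hy
    simp only [iteratedDirDeriv_cons, heq.fderiv_eq]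
  | swap v w l => exact iteratedDirDeriv_swap hf w v l
  | trans _ _ ih₁ ih₂ => exact (ih₁ hf).trans (ih₂ hf)

theorem iteratedDirDeriv_ofFn {k : ℕ} (u : Fin k → E) {x : E} (hf : AnalyticAt 𝕜 f x) :
    iteratedDirDeriv 𝕜 (List.ofFn u) f x = iteratedFDeriv 𝕜 k f x u := by
  induction k generalizing x with
  | zero => simp [iteratedDirDeriv]
  | succ k ih =>
    have heq : iteratedDirDeriv 𝕜 (List.ofFn fun i => u i.succ) f =ᶠ[𝓝 x]
        fun y => iteratedFDeriv 𝕜 k f y (Fin.tail u) :=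
      hf.eventually_analyticAt.mono fun y hy => ih _ hy
    rw [List.ofFn_succ, iteratedDirDeriv_cons, heq.fderiv_eq,
      fderiv_continuousMultilinear_apply_const_apply
        (hf.contDiffAt.differentiableAt_iteratedFDeriv (WithTop.coe_lt_top _)),
      iteratedFDeriv_succ_apply_left]

end IteratedDirDeriv

section Lines

variable {𝕜 : Type*} [NontriviallyNormedField 𝕜]
  {E F : Type*} [NormedAddCommGroup E] [NormedSpace 𝕜 E] [NormedAddCommGroup F] [NormedSpace 𝕜 F]
  [CompleteSpace F] {f : E → F}

theorem iteratedDeriv_comp_add_smul (b v : E) (k : ℕ) {s : 𝕜}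
    (hf : AnalyticAt 𝕜 f (b + s • v)) :
    iteratedDeriv k (fun t : 𝕜 => f (b + t • v)) s =
      iteratedFDeriv 𝕜 k f (b + s • v) (fun _ => v) := by
  induction k generalizing s with
  | zero => simp
  | succ k ih =>
    have hline : HasDerivAt (fun t : 𝕜 => b + t • v) v s := by
      simpa using ((hasDerivAt_id s).smul_const v).const_add b
    have heq : iteratedDeriv k (fun t : 𝕜 => f (b + t • v)) =ᶠ[𝓝 s]
        fun t => iteratedFDeriv 𝕜 k f (b + t • v) (fun _ => v) :=
      (hline.continuousAt.eventually hf.eventually_analyticAt).mono fun t ht => ih ht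
    have happly := (hf.contDiffAt.differentiableAt_iteratedFDeriv (m := k)
      (WithTop.coe_lt_top _)).hasFDerivAt.continuousMultilinear_apply_const (fun _ => v)
    have hderiv : HasDerivAt (fun t => iteratedFDeriv 𝕜 k f (b + t • v) (fun _ => v))
        (fderiv 𝕜 (iteratedFDeriv 𝕜 k f) (b + s • v) v (fun _ => v)) s :=
      (happly.comp_hasDerivAt s hline :)
    rw [iteratedDeriv_succ, heq.deriv_eq, hderiv.deriv, iteratedFDeriv_succ_apply_left]
    rfl

theorem AnalyticAt.iteratedDeriv_comp_add_smul_zero {b : E} (hf : AnalyticAt 𝕜 f b) (v : E)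
    (k : ℕ) :
    iteratedDeriv k (fun t : 𝕜 => f (b + t • v)) 0 = iteratedFDeriv 𝕜 k f b (fun _ => v) := by
  simpa using iteratedDeriv_comp_add_smul b v k (s := (0 : 𝕜)) (by simpa using hf)

end Lines

section MultiIndex

variable {n : ℕ}

def multiIndexList (α : Fin n → ℕ) : List (Fin n) :=
  (List.finRange n).flatMap fun j => List.replicate (α j) j

theorem count_multiIndexList (α : Fin n → ℕ) (j : Fin n) : (multiIndexList α).count j = α j := by
  simp [multiIndexList, List.count_flatMap, List.count_replicate, ← Fin.sum_univ_def]

theorem length_multiIndexList (α : Fin n → ℕ) : (multiIndexList α).length = ∑ j, α j := by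
  simp [multiIndexList, List.length_flatMap, Fin.sum_univ_def]

theorem sum_count_ofFn {k : ℕ} (φ : Fin k → Fin n) : ∑ j, (List.ofFn φ).count j = k := by
  simpa using Multiset.sum_count_eq_card (s := Finset.univ) (m := (List.ofFn φ : Multiset (Fin n)))
    (by simp)

theorem iterate_pd_eq_iteratedDirDeriv (i : Fin n) (k : ℕ) (f : (Fin n → ℝ) → ℝ) :
    (pd i)^[k] f = iteratedDirDeriv ℝ (List.replicate k (Pi.single i 1)) f := by
  induction k with
  | zero => rfl
  | succ k ih => rw [Function.iterate_succ_apply', ih, List.replicate_succ]; rfl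

theorem md_eq_iteratedDirDeriv (α : Fin n → ℕ) (f : (Fin n → ℝ) → ℝ) :
    md α f = iteratedDirDeriv ℝ ((multiIndexList α).map fun j => Pi.single j 1) f := by
  rw [md, multiIndexList]
  induction List.finRange n with
  | nil => rfl
  | cons j l ih =>
    rw [List.foldr_cons, ih, List.flatMap_cons, List.map_append, iteratedDirDeriv_append,
      List.map_replicate, iterate_pd_eq_iteratedDirDeriv]

end MultiIndex

section Order

variable {n : ℕ} {f : (Fin n → ℝ) → ℝ} {a : Fin n → ℝ}

theorem iteratedFDeriv_single_eq_md (hf : AnalyticAt ℝ f a) {k : ℕ} (φ : Fin k → Fin n) :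
    iteratedFDeriv ℝ k f a (fun s => Pi.single (φ s) 1) =
      md (fun j => (List.ofFn φ).count j) f a := by
  have hlist : List.ofFn (fun s => (Pi.single (φ s) 1 : Fin n → ℝ)) =
      (List.ofFn φ).map fun j => Pi.single j 1 := by rw [List.map_ofFn]; rfl
  rw [← iteratedDirDeriv_ofFn _ hf, md_eq_iteratedDirDeriv, hlist]
  refine ((List.perm_iff_count.2 fun j => ?_).map _).iteratedDirDeriv_eq hf
  rw [count_multiIndexList]

theorem md_eq_zero_of_iteratedFDeriv_eq_zero (hf : AnalyticAt ℝ f a) (α : Fin n → ℕ)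
    (h : iteratedFDeriv ℝ (∑ j, α j) f a = 0) : md α f a = 0 := by
  have hl : iteratedFDeriv ℝ ((multiIndexList α).map fun j => (Pi.single j 1 : Fin n → ℝ)).length
      f a = 0 := by
    rwa [List.length_map, length_multiIndexList]
  rw [md_eq_iteratedDirDeriv, ← List.ofFn_get (List.map _ _), iteratedDirDeriv_ofFn _ hf, hl]
  rfl

theorem iteratedFDeriv_eq_zero_iff_md (hf : AnalyticAt ℝ f a) (k : ℕ) :
    iteratedFDeriv ℝ k f a = 0 ↔ ∀ α : Fin n → ℕ, ∑ j, α j = k → md α f a = 0 := by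
  refine ⟨fun h α hα => md_eq_zero_of_iteratedFDeriv_eq_zero hf α (hα ▸ h), fun h => ?_⟩
  refine ContinuousMultilinearMap.toMultilinearMap_injective <|
    Module.Basis.ext_multilinear (fun _ => Pi.basisFun ℝ (Fin n)) fun φ => ?_
  simpa [iteratedFDeriv_single_eq_md hf] using h _ (sum_count_ofFn φ)

theorem natCast_le_ordAt_iff_md (m : ℕ) :
    (m : ℕ∞) ≤ ordAt f a ↔ ∀ α : Fin n → ℕ, ∑ j, α j < m → md α f a = 0 := by
  simp only [ordAt, le_sInf_iff, Set.mem_ofPred_eq, forall_exists_index, and_imp,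
    forall_apply_eq_imp_iff₂, Nat.cast_le]
  exact forall_congr' fun α => by rw [← not_lt, not_imp_not]

theorem natCast_le_ordAt_iff (hf : AnalyticAt ℝ f a) (m : ℕ) :
    (m : ℕ∞) ≤ ordAt f a ↔ ∀ k < m, iteratedFDeriv ℝ k f a = 0 := by
  simp only [natCast_le_ordAt_iff_md, iteratedFDeriv_eq_zero_iff_md hf]
  exact ⟨fun h k hk α hα => h α (hα ▸ hk), fun h α hα => h _ hα α rfl⟩

theorem natCast_le_ordAt_iff_isBigO (hf : AnalyticAt ℝ f a) (m : ℕ) :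
    (m : ℕ∞) ≤ ordAt f a ↔ (fun h => f (a + h)) =O[𝓝 0] fun h => ‖h‖ ^ m := by
  simp only [natCast_le_ordAt_iff hf, hf.isBigO_pow_iff,
    hf.contDiffAt.iteratedFDeriv_eq_zero_iff_forall_diag]

theorem ordAt_le_ordAt_comp {m : ℕ} {φ : (Fin m → ℝ) → Fin n → ℝ} {y : Fin m → ℝ}
    (hφ : AnalyticAt ℝ φ y) (hf : AnalyticAt ℝ f (φ y)) :
    ordAt f (φ y) ≤ ordAt (fun z => f (φ z)) y := by
  refine ENat.forall_natCast_le_iff_le.mp fun d hd => ?_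
  rw [natCast_le_ordAt_iff_isBigO hf] at hd
  rw [natCast_le_ordAt_iff_isBigO (f := fun z => f (φ z)) (hf.comp hφ)]
  have hshift : Tendsto (fun h => y + h) (𝓝 0) (𝓝 y) := by
    simpa using (continuous_const_add y).tendsto 0
  have hδ : (fun h => φ (y + h) - φ y) =O[𝓝 0] fun h => h :=
    (hφ.differentiableAt.hasFDerivAt.isBigO_sub.comp_tendsto hshift).congr_right
      fun h => by simp
  have hδ0 : Tendsto (fun h => φ (y + h) - φ y) (𝓝 0) (𝓝 0) := by
    simpa using ((hφ.continuousAt.tendsto.comp hshift).sub_const (φ y))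
  exact ((hd.comp_tendsto hδ0).trans (hδ.norm_norm.pow d)).congr_left fun h => by simp

end Order

section BlowChart

variable {n : ℕ} {I : Finset (Fin n)} {i : Fin n}

theorem analyticAt_blowChart (I : Finset (Fin n)) (i : Fin n) (y : Fin n → ℝ) :
    AnalyticAt ℝ (blowChart I i) y := by
  have hproj (j : Fin n) : AnalyticAt ℝ (fun z : Fin n → ℝ => z j) y :=
    (ContinuousLinearMap.proj (R := ℝ) (φ := fun _ : Fin n => ℝ) j).analyticAt y
  refine analyticAt_pi_iff.2 fun j => ?_
  unfold blowChart
  split_ifs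
  exacts [(hproj i).mul (hproj j), hproj j]

theorem blowChart_apply_eq_zero {y : Fin n → ℝ} (hyi : y i = 0) {j : Fin n} (hj : j ∈ I) :
    blowChart I i y j = 0 := by
  by_cases hji : j = i
  · subst hji; simp [blowChart, hyi]
  · simp [blowChart, hj, hji, hyi]

theorem exists_blowChart_add_smul (hi : i ∈ I) {x₀ : Fin n → ℝ} (hx₀ : ∀ j ∈ I, x₀ j = 0)
    {w : Fin n → ℝ} (hwi : w i ≠ 0) :
    ∃ y u : Fin n → ℝ, y i = 0 ∧ ∀ s : ℝ, blowChart I i (y + s • u) = x₀ + s • w := by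
  refine ⟨fun j => if j ∈ I ∧ j ≠ i then w j / w i else x₀ j,
    fun j => if j ∈ I ∧ j ≠ i then 0 else w j, by simp [hx₀ i hi], fun s => funext fun j => ?_⟩
  by_cases hj : j ∈ I ∧ j ≠ i
  · simp [blowChart, hj, hx₀ i hi, hx₀ j hj.1]
    field_simp
  · simp [blowChart, hj]

theorem natCast_le_ordAt_of_forall_blowChart_eq (hi : i ∈ I) {f : (Fin n → ℝ) → ℝ}
    {x₀ : Fin n → ℝ} (hx₀ : ∀ j ∈ I, x₀ j = 0) (hf : AnalyticAt ℝ f x₀) {d : ℕ}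
    (h : ∀ y, y i = 0 → blowChart I i y = x₀ → (d : ℕ∞) ≤ ordAt (fun z => f (blowChart I i z)) y) :
    (d : ℕ∞) ≤ ordAt f x₀ := by
  refine (natCast_le_ordAt_iff hf d).2 fun k hk => ?_
  rw [hf.contDiffAt.iteratedFDeriv_eq_zero_iff_forall_diag]
  have hdense : Dense {w : Fin n → ℝ | w i ≠ 0} :=
    (dense_compl_singleton 0).preimage (isOpenMap_eval i)
  refine congrFun (Continuous.ext_on hdense ?_ continuous_const fun w (hwi : w i ≠ 0) => ?_)
  · exact (iteratedFDeriv ℝ k f x₀).cont.comp (continuous_pi fun _ => continuous_id)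
  obtain ⟨y, u, hyi, hline⟩ := exists_blowChart_add_smul hi hx₀ hwi
  have hy : blowChart I i y = x₀ := by simpa using hline 0
  have hg : AnalyticAt ℝ (fun z => f (blowChart I i z)) y :=
    (hy ▸ hf).comp (analyticAt_blowChart I i y)
  calc iteratedFDeriv ℝ k f x₀ (fun _ => w)
      = iteratedDeriv k (fun s : ℝ => f (blowChart I i (y + s • u))) 0 := by
        simp_rw [hline, hf.iteratedDeriv_comp_add_smul_zero]
    _ = iteratedFDeriv ℝ k (fun z => f (blowChart I i z)) y (fun _ => u) :=
        hg.iteratedDeriv_comp_add_smul_zero u k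
    _ = 0 := by rw [(natCast_le_ordAt_iff hg d).1 (h y hyi hy) k hk]; rfl

end BlowChart

theorem stmt6_general {n : ℕ} (U : Set (Fin n → ℝ))
    (I : Finset (Fin n)) (i : Fin n) (hi : i ∈ I)
    (f : (Fin n → ℝ) → ℝ) (hf : ∀ x ∈ U, AnalyticAt ℝ f x) :
    (⨅ y ∈ {y | blowChart I i y ∈ U ∧ y i = 0},
        ordAt (fun z => f (blowChart I i z)) y)
      = ⨅ x ∈ {x ∈ U | ∀ j ∈ I, x j = 0}, ordAt f x := by
  refine le_antisymm (le_iInf₂ fun x₀ ⟨hx₀U, hx₀⟩ => ?_) (le_iInf₂ fun y ⟨hyU, hyi⟩ => ?_)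
  · refine ENat.forall_natCast_le_iff_le.mp fun d hd => ?_
    refine natCast_le_ordAt_of_forall_blowChart_eq hi hx₀ (hf x₀ hx₀U) fun y hyi hy => ?_
    exact hd.trans (iInf₂_le y ⟨hy ▸ hx₀U, hyi⟩)
  · exact (iInf₂_le _ ⟨hyU, fun j hj => blowChart_apply_eq_zero hyi hj⟩).trans
      (ordAt_le_ordAt_comp (analyticAt_blowChart I i y) (hf _ hyU))

/-- **Order along the exceptional divisor.**  For `U ⊆ ℝⁿ` open, `I ⊆ {1,…,n}` nonempty
with `C = {x ∈ U : x_I = 0}` nonempty, `i ∈ I`, and `f` real-analytic on `U`: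
`inf{ord(f∘π_i; y) : y ∈ π_i⁻¹(U), y_i = 0} = inf{ord(f;x) : x ∈ C}` in `ℕ ∪ {∞}`. -/
theorem stmt6 {n : ℕ} (U : Set (Fin n → ℝ)) (hU : IsOpen U)
    (I : Finset (Fin n)) (hIne : I.Nonempty) (i : Fin n) (hi : i ∈ I)
    (f : (Fin n → ℝ) → ℝ) (hf : ∀ x ∈ U, AnalyticAt ℝ f x)
    (hC : {x ∈ U | ∀ j ∈ I, x j = 0}.Nonempty) :
    (⨅ y ∈ {y | blowChart I i y ∈ U ∧ y i = 0},
        ordAt (fun z => f (blowChart I i z)) y)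
      = ⨅ x ∈ {x ∈ U | ∀ j ∈ I, x j = 0}, ordAt f x :=
  stmt6_general U I i hi f hf
end

section
/- Let U ⊆ ℝ^n be open, let I ⊆ {1,…,n}, let i, j ∈ I be distinct, and let m be a positive integer. Set C = {x ∈ U : x_l = 0 for all l ∈ I}, let π_i = π_{I,i} be the i-th standard blowup chart and U_i = π_i^{-1}(U). Let f : U → ℝ be real-analytic with ord(f;x) = m for all x ∈ C, and suppose ∂^{m−1} f/∂x_j^{m−1}(x) = 0 for every x ∈ U with x_j = 0. Let g : U_i → ℝ be a real-analytic function with f(π_i(y)) = y_i^m · g(y) for all y ∈ U_i. Then ∂^{m−1} g/∂y_j^{m−1}(y) = 0 for every y ∈ U_i with y_j = 0. -/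
open Filter Topology
open scoped ContDiff

section PartialDerivatives

variable {n : ℕ}

lemma pd_eqOn {s : Set (Fin n → ℝ)} (hs : IsOpen s) (j : Fin n) {f₁ f₂ : (Fin n → ℝ) → ℝ}
    (h : Set.EqOn f₁ f₂ s) : Set.EqOn (pd j f₁) (pd j f₂) s := fun x hx => by
  simp only [pd, (eventuallyEq_of_mem (hs.mem_nhds hx) h).fderiv_eq]

lemma iterate_pd_eqOn {s : Set (Fin n → ℝ)} (hs : IsOpen s) (j : Fin n) (k : ℕ)
    {f₁ f₂ : (Fin n → ℝ) → ℝ} (h : Set.EqOn f₁ f₂ s) :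
    Set.EqOn ((pd j)^[k] f₁) ((pd j)^[k] f₂) s := by
  induction k with
  | zero => exact h
  | succ k ih => simpa only [Function.iterate_succ_apply'] using pd_eqOn hs j ih

lemma contDiffOn_pd_s7 {s : Set (Fin n → ℝ)} (hs : IsOpen s) {h : (Fin n → ℝ) → ℝ}
    (hh : ContDiffOn ℝ ∞ h s) (j : Fin n) : ContDiffOn ℝ ∞ (pd j h) s :=
  (hh.fderiv_of_isOpen hs (by simp)).clm_apply contDiffOn_const

lemma contDiffOn_iterate_pd_s7 {s : Set (Fin n → ℝ)} (hs : IsOpen s) {h : (Fin n → ℝ) → ℝ}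
    (hh : ContDiffOn ℝ ∞ h s) (j : Fin n) (k : ℕ) : ContDiffOn ℝ ∞ ((pd j)^[k] h) s := by
  induction k with
  | zero => exact hh
  | succ k ih => simpa only [Function.iterate_succ_apply'] using contDiffOn_pd_s7 hs ih j

lemma pd_pow_mul_of_ne {i j : Fin n} (hij : i ≠ j) (p : ℕ) {h : (Fin n → ℝ) → ℝ}
    {y : Fin n → ℝ} (hh : DifferentiableAt ℝ h y) :
    pd j (fun y => y i ^ p * h y) y = y i ^ p * pd j h y := by
  have hpow : DifferentiableAt ℝ (fun y : Fin n → ℝ => y i ^ p) y := by fun_prop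
  have hline : lineDeriv ℝ (fun y : Fin n → ℝ => y i ^ p) y (Pi.single j 1) = 0 := by
    simp [lineDeriv, Pi.single_eq_of_ne hij]
  rw [pd, fderiv_fun_mul hpow hh]
  simp [← hpow.lineDeriv_eq_fderiv, hline, pd]

lemma iterate_pd_pow_mul_of_ne {s : Set (Fin n → ℝ)} (hs : IsOpen s) {i j : Fin n}
    (hij : i ≠ j) (p k : ℕ) {h : (Fin n → ℝ) → ℝ} (hh : ContDiffOn ℝ ∞ h s) :
    Set.EqOn ((pd j)^[k] (fun y => y i ^ p * h y)) (fun y => y i ^ p * (pd j)^[k] h y) s := by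
  induction k with
  | zero => exact fun _ _ => rfl
  | succ k ih =>
    intro y hy
    have hd : DifferentiableAt ℝ ((pd j)^[k] h) y :=
      ((contDiffOn_iterate_pd_s7 hs hh j k).contDiffAt (hs.mem_nhds hy)).differentiableAt (by simp)
    simp only [Function.iterate_succ_apply']
    rw [pd_eqOn hs j ih hy, pd_pow_mul_of_ne hij p hd]

end PartialDerivatives

lemma eq_zero_of_forall_update_ne {n : ℕ} {h : (Fin n → ℝ) → ℝ} {y : Fin n → ℝ}
    {s : Set (Fin n → ℝ)} (i : Fin n) (hs : s ∈ 𝓝 y) (hh : ContinuousAt h y)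
    (hzero : ∀ t ≠ y i, Function.update y i t ∈ s → h (Function.update y i t) = 0) :
    h y = 0 := by
  have hline : Tendsto (Function.update y i) (𝓝[≠] (y i)) (𝓝 y) := by
    have hcont : Continuous (Function.update y i) := continuous_const.update i continuous_id
    simpa using (hcont.tendsto (y i)).mono_left nhdsWithin_le_nhds
  have hev : ∀ᶠ t in 𝓝[≠] (y i), h (Function.update y i t) = 0 := by
    filter_upwards [hline.eventually hs, self_mem_nhdsWithin] with t hts ht
    exact hzero t ht hts
  exact tendsto_nhds_unique (hh.tendsto.comp hline)
    (tendsto_const_nhds.congr' (hev.mono fun _ ht => ht.symm))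

section BlowChart

variable {n : ℕ} {I : Finset (Fin n)} {i j : Fin n}

lemma contDiff_blowChart (I : Finset (Fin n)) (i : Fin n) : ContDiff ℝ ∞ (blowChart I i) := by
  refine contDiff_pi.2 fun l => ?_
  by_cases hl : l ∈ I ∧ l ≠ i
  · simp only [blowChart, if_pos hl]; fun_prop
  · simp only [blowChart, if_neg hl]; fun_prop

lemma blowChart_add_smul_single (hij : i ≠ j) (hj : j ∈ I) (y : Fin n → ℝ) (t : ℝ) :
    blowChart I i (y + t • Pi.single j 1) = blowChart I i y + (y i * t) • Pi.single j 1 := by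
  funext l
  by_cases hl : l = j
  · subst hl; simp [blowChart, hj, hij.symm]; ring
  · by_cases hli : l ∈ I ∧ l ≠ i <;> simp [blowChart, hli, hl, Pi.single_eq_of_ne hij]

lemma fderiv_blowChart_single (hij : i ≠ j) (hj : j ∈ I) (y : Fin n → ℝ) :
    fderiv ℝ (blowChart I i) y (Pi.single j 1) = y i • Pi.single j 1 := by
  have hline : HasDerivAt (fun t : ℝ => blowChart I i y + (y i * t) • Pi.single j 1)
      (y i • Pi.single j 1) 0 := by
    simpa using (((hasDerivAt_id (0 : ℝ)).const_mul (y i)).smul_const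
      (Pi.single j 1 : Fin n → ℝ)).const_add (blowChart I i y)
  rw [← ((contDiff_blowChart I i).differentiable (by simp) y).lineDeriv_eq_fderiv, lineDeriv]
  simp only [blowChart_add_smul_single hij hj]
  exact hline.deriv

lemma pd_comp_blowChart (hij : i ≠ j) (hj : j ∈ I) {h : (Fin n → ℝ) → ℝ} {y : Fin n → ℝ}
    (hh : DifferentiableAt ℝ h (blowChart I i y)) :
    pd j (fun y => h (blowChart I i y)) y = y i * pd j h (blowChart I i y) := by
  rw [pd, fderiv_fun_comp y hh ((contDiff_blowChart I i).differentiable (by simp) y)]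
  simp [fderiv_blowChart_single hij hj, pd]

lemma iterate_pd_comp_blowChart {U : Set (Fin n → ℝ)} (hU : IsOpen U) (hij : i ≠ j) (hj : j ∈ I)
    (k : ℕ) {h : (Fin n → ℝ) → ℝ} (hh : ContDiffOn ℝ ∞ h U) :
    Set.EqOn ((pd j)^[k] (fun y => h (blowChart I i y)))
      (fun y => y i ^ k * (pd j)^[k] h (blowChart I i y)) (blowChart I i ⁻¹' U) := by
  have hV : IsOpen (blowChart I i ⁻¹' U) := hU.preimage (contDiff_blowChart I i).continuous
  induction k with
  | zero => exact fun _ _ => by simp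
  | succ k ih =>
    intro y hy
    have hd : DifferentiableAt ℝ ((pd j)^[k] h) (blowChart I i y) :=
      ((contDiffOn_iterate_pd_s7 hU hh j k).contDiffAt (hU.mem_nhds hy)).differentiableAt (by simp)
    have hdπ : DifferentiableAt ℝ (fun y => (pd j)^[k] h (blowChart I i y)) y :=
      hd.comp y ((contDiff_blowChart I i).differentiable (by simp) y)
    simp only [Function.iterate_succ_apply']
    rw [pd_eqOn hV j ih hy, pd_pow_mul_of_ne hij k hdπ, pd_comp_blowChart hij hj hd]
    ring

lemma pow_mul_iterate_pd_of_comp_blowChart_eq {U : Set (Fin n → ℝ)} (hU : IsOpen U)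
    (hij : i ≠ j) (hj : j ∈ I) (m k : ℕ) {f g : (Fin n → ℝ) → ℝ} (hf : ContDiffOn ℝ ∞ f U)
    (hg : ContDiffOn ℝ ∞ g (blowChart I i ⁻¹' U))
    (hfg : ∀ y ∈ blowChart I i ⁻¹' U, f (blowChart I i y) = y i ^ m * g y) :
    ∀ y ∈ blowChart I i ⁻¹' U,
      y i ^ m * (pd j)^[k] g y = y i ^ k * (pd j)^[k] f (blowChart I i y) := by
  have hV : IsOpen (blowChart I i ⁻¹' U) := hU.preimage (contDiff_blowChart I i).continuous
  intro y hy
  calc y i ^ m * (pd j)^[k] g y = (pd j)^[k] (fun y => y i ^ m * g y) y :=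
        (iterate_pd_pow_mul_of_ne hV hij m k hg hy).symm
    _ = (pd j)^[k] (fun y => f (blowChart I i y)) y := (iterate_pd_eqOn hV j k hfg hy).symm
    _ = y i ^ k * (pd j)^[k] f (blowChart I i y) := iterate_pd_comp_blowChart hU hij hj k hf hy

end BlowChart

theorem stmt7_general {n : ℕ} (U : Set (Fin n → ℝ)) (hU : IsOpen U)
    (I : Finset (Fin n)) (i j : Fin n) (hj : j ∈ I) (hij : i ≠ j)
    (m : ℕ)
    (f : (Fin n → ℝ) → ℝ) (hf : ∀ x ∈ U, AnalyticAt ℝ f x)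
    (hvan : ∀ x ∈ U, x j = 0 → (pd j)^[m - 1] f x = 0)
    (g : (Fin n → ℝ) → ℝ)
    (hganal : ∀ y : Fin n → ℝ, blowChart I i y ∈ U → AnalyticAt ℝ g y)
    (hfg : ∀ y : Fin n → ℝ, blowChart I i y ∈ U → f (blowChart I i y) = y i ^ m * g y) :
    ∀ y : Fin n → ℝ, blowChart I i y ∈ U → y j = 0 → (pd j)^[m - 1] g y = 0 := by
  set V := blowChart I i ⁻¹' U
  have hV : IsOpen V := hU.preimage (contDiff_blowChart I i).continuous
  have hg : ContDiffOn ℝ ∞ g V := AnalyticOnNhd.contDiffOn_of_completeSpace hganal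
  have hzero : ∀ z ∈ V, z j = 0 → z i ≠ 0 → (pd j)^[m - 1] g z = 0 := by
    intro z hz hzj hzi
    have hfz : (pd j)^[m - 1] f (blowChart I i z) = 0 :=
      hvan _ hz (by simp [blowChart, hj, hij.symm, hzj])
    have key := pow_mul_iterate_pd_of_comp_blowChart_eq hU hij hj m (m - 1)
      (AnalyticOnNhd.contDiffOn_of_completeSpace hf) hg hfg z hz
    rw [hfz, mul_zero] at key
    exact (mul_eq_zero.1 key).resolve_left (pow_ne_zero m hzi)
  intro y hy hyj
  rcases ne_or_eq (y i) 0 with hyi | hyi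
  · exact hzero y hy hyj hyi
  refine eq_zero_of_forall_update_ne i (hV.mem_nhds hy)
    ((contDiffOn_iterate_pd_s7 hV hg j _).continuousOn.continuousAt (hV.mem_nhds hy)) ?_
  intro t ht hts
  exact hzero _ hts (by simp [Function.update_of_ne hij.symm, hyj]) (by simpa [hyi] using ht)

/-- **Persistence of vanishing of `∂^{m−1}/∂x_j^{m−1}` under strict transform.**
Let `i ≠ j` in `I`, `m ≥ 1`, `f` real-analytic on the open set `U` with `ord(f;x) = m` for
all `x ∈ C = {x ∈ U : x_I = 0}`, and `∂^{m−1}f/∂x_j^{m−1} = 0` on `{x ∈ U : x_j = 0}`.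
If `g` is real-analytic on `U_i = π_i⁻¹(U)` with `f(π_i(y)) = y_i^m·g(y)` on `U_i` (the strict
transform), then `∂^{m−1}g/∂y_j^{m−1} = 0` on `{y ∈ U_i : y_j = 0}`. -/
theorem stmt7 {n : ℕ} (U : Set (Fin n → ℝ)) (hU : IsOpen U)
    (I : Finset (Fin n)) (i j : Fin n) (hi : i ∈ I) (hj : j ∈ I) (hij : i ≠ j)
    (m : ℕ) (hm : 0 < m)
    (f : (Fin n → ℝ) → ℝ) (hf : ∀ x ∈ U, AnalyticAt ℝ f x)
    (hord : ∀ x ∈ U, (∀ l ∈ I, x l = 0) → ordAt f x = (m : ℕ∞))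
    (hvan : ∀ x ∈ U, x j = 0 → (pd j)^[m - 1] f x = 0)
    (g : (Fin n → ℝ) → ℝ)
    (hganal : ∀ y : Fin n → ℝ, blowChart I i y ∈ U → AnalyticAt ℝ g y)
    (hfg : ∀ y : Fin n → ℝ, blowChart I i y ∈ U → f (blowChart I i y) = y i ^ m * g y) :
    ∀ y : Fin n → ℝ, blowChart I i y ∈ U → y j = 0 → (pd j)^[m - 1] g y = 0 :=
  stmt7_general U hU I i j hj hij m f hf hvan g hganal hfg
end

section
/- Every blowup set Y ⊆ ℝ^n is polygonally connected: for all x, y ∈ Y there exist finitely many points x_0, …, x_N ∈ ℝ^n with x_0 = x, x_N = y, and the line segment {(1−t)x_{j−1} + t x_j : 0 ≤ t ≤ 1} contained in Y for every j ∈ {1,…,N}. -/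
/-- Intervals in `ℝ` whose endpoints lie in `ℚ ∪ {−∞,+∞}` (including degenerate ones). -/
inductive IsRatInterval : Set ℝ → Prop
  | empty : IsRatInterval ∅
  | univ : IsRatInterval Set.univ
  | Icc (a b : ℚ) : IsRatInterval (Set.Icc (a : ℝ) b)
  | Ico (a b : ℚ) : IsRatInterval (Set.Ico (a : ℝ) b)
  | Ioc (a b : ℚ) : IsRatInterval (Set.Ioc (a : ℝ) b)
  | Ioo (a b : ℚ) : IsRatInterval (Set.Ioo (a : ℝ) b)
  | Ici (a : ℚ) : IsRatInterval (Set.Ici (a : ℝ))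
  | Ioi (a : ℚ) : IsRatInterval (Set.Ioi (a : ℝ))
  | Iic (a : ℚ) : IsRatInterval (Set.Iic (a : ℝ))
  | Iio (a : ℚ) : IsRatInterval (Set.Iio (a : ℝ))

/-- A rational box in `ℝⁿ`: a product of rational intervals. -/
def IsRatBox {n : ℕ} (B : Set (Fin n → ℝ)) : Prop :=
  ∃ S : Fin n → Set ℝ, (∀ j, IsRatInterval (S j)) ∧ B = {y | ∀ j, y j ∈ S j}

/-- Blowup sets in `ℝⁿ`, defined inductively: rational boxes are blowup sets, and the
preimage of a blowup set meeting `{x : x_I = 0}` under a standard blowup chart `π_{I,i}`,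
intersected with a rational box in the `I`-coordinates, is a blowup set. -/
inductive IsBlowupSet {n : ℕ} : Set (Fin n → ℝ) → Prop
  | box {B : Set (Fin n → ℝ)} (hB : IsRatBox B) : IsBlowupSet B
  | blow {X : Set (Fin n → ℝ)} (hX : IsBlowupSet X) (I : Finset (Fin n)) (hI : I.Nonempty)
      (hmeet : ∃ x ∈ X, ∀ j ∈ I, x j = 0) (i : Fin n) (hi : i ∈ I)
      (S : Fin n → Set ℝ) (hS : ∀ j, IsRatInterval (S j)) :
      IsBlowupSet {y | blowChart I i y ∈ X ∧ ∀ j ∈ I, y j ∈ S j}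

/-!
A blowup set has the form `Π_j L_j ∩ S` with intervals `L_j` and a set `S` closed under
multiplying the coordinates by any `t ∈ [0,1]ⁿ`. This survives a blowup step: the chart
`π_{I,i}` is multiplicative and maps `[0,1]ⁿ` into itself, and since the set meets `{x_I = 0}`,
the interval constraints on the `I`-coordinates contain `0` and can be moved into `S`.

For two points `u, v` of such a set, each `L_j` contains a point lying both between `0` and `u_j`
and between `0` and `v_j`: `0` itself if `0 ∈ L_j`, and otherwise the one of `u_j, v_j` of smaller
absolute value, as they then have the same sign. The point `w` with these coordinates is joined
to `u` and to `v` by segments inside the set.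
-/

open Set

section CoordStarConvex

variable {𝕜 ι : Type*} [Field 𝕜] [LinearOrder 𝕜]

def IsCoordStarConvex (S : Set (ι → 𝕜)) : Prop :=
  ∀ p ∈ S, ∀ t ∈ Icc (0 : ι → 𝕜) 1, t * p ∈ S

def IsPiConvexInterStar (X : Set (ι → 𝕜)) : Prop :=
  ∃ (L : ι → Set 𝕜) (S : Set (ι → 𝕜)),
    (∀ j, Convex 𝕜 (L j)) ∧ IsCoordStarConvex S ∧ X = univ.pi L ∩ S

theorem IsCoordStarConvex.inter {S T : Set (ι → 𝕜)} (hS : IsCoordStarConvex S)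
    (hT : IsCoordStarConvex T) : IsCoordStarConvex (S ∩ T) :=
  fun p hp t ht => ⟨hS p hp.1 t ht, hT p hp.2 t ht⟩

theorem IsPiConvexInterStar.inter_pi {X : Set (ι → 𝕜)} (hX : IsPiConvexInterStar X)
    {C : ι → Set 𝕜} (hC : ∀ j, Convex 𝕜 (C j)) : IsPiConvexInterStar (X ∩ univ.pi C) := by
  obtain ⟨L, S, hL, hS, rfl⟩ := hX
  refine ⟨fun j => L j ∩ C j, S, fun j => (hL j).inter (hC j), hS, ?_⟩
  rw [pi_inter_distrib]
  exact inter_right_comm _ _ _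

variable [IsStrictOrderedRing 𝕜]

theorem isCoordStarConvex_pi {K : Set ι} {C : ι → Set 𝕜} (hC : ∀ j ∈ K, Convex 𝕜 (C j))
    (h0 : ∀ j ∈ K, (0 : 𝕜) ∈ C j) : IsCoordStarConvex (K.pi C) :=
  fun _ hp _ ht j hj => (hC j hj).smul_mem_of_zero_mem (h0 j hj) (hp j hj) ⟨ht.1 j, ht.2 j⟩

theorem Convex.exists_mem_eq_mul_eq_mul {C : Set 𝕜} (hC : Convex 𝕜 C) {a b : 𝕜} (ha : a ∈ C)
    (hb : b ∈ C) : ∃ c ∈ C, ∃ s ∈ Icc (0 : 𝕜) 1, ∃ s' ∈ Icc (0 : 𝕜) 1, c = s * a ∧ c = s' * b := by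
  by_cases h0 : (0 : 𝕜) ∈ C
  · exact ⟨0, h0, 0, left_mem_Icc.2 zero_le_one, 0, left_mem_Icc.2 zero_le_one, by simp, by simp⟩
  wlog hab : |a| ≤ |b| generalizing a b
  · obtain ⟨c, hc, s, hs, s', hs', hca, hcb⟩ := this hb ha (le_of_not_ge hab)
    exact ⟨c, hc, s', hs', s, hs, hcb, hca⟩
  have hb0 : b ≠ 0 := fun h => h0 (h ▸ hb)
  have hsign : 0 ≤ a / b := by
    rcases hb0.lt_or_gt with hbn | hbp
    · exact div_nonneg_of_nonpos
        (not_lt.1 fun hap => h0 (hC.ordConnected.out hb ha ⟨hbn.le, hap.le⟩)) hbn.le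
    · exact div_nonneg
        (not_lt.1 fun han => h0 (hC.ordConnected.out ha hb ⟨han.le, hbp.le⟩)) hbp.le
  have hle : a / b ≤ 1 :=
    (le_abs_self _).trans (by rw [abs_div]; exact div_le_one_of_le₀ hab (abs_nonneg _))
  exact ⟨a, ha, 1, right_mem_Icc.2 zero_le_one, a / b, ⟨hsign, hle⟩, (one_mul a).symm,
    (div_mul_cancel₀ a hb0).symm⟩

theorem segment_mul_subset_pi_inter {L : ι → Set 𝕜} {S : Set (ι → 𝕜)}
    (hL : ∀ j, Convex 𝕜 (L j)) (hS : IsCoordStarConvex S) {u t : ι → 𝕜}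
    (hu : u ∈ univ.pi L ∩ S) (ht : t ∈ Icc 0 1) (htu : t * u ∈ univ.pi L) :
    segment 𝕜 u (t * u) ⊆ univ.pi L ∩ S := by
  rintro x ⟨a, b, ha, hb, hab, rfl⟩
  refine ⟨(convex_pi fun j _ => hL j) hu.1 htu ha hb hab, ?_⟩
  have hcoeff : a • (1 : ι → 𝕜) + b • t ∈ Icc (0 : ι → 𝕜) 1 :=
    convex_Icc (0 : ι → 𝕜) 1 (right_mem_Icc.2 zero_le_one) ht ha hb hab
  have := hS u hu.2 _ hcoeff
  rwa [add_mul, smul_mul_assoc, smul_mul_assoc, one_mul] at this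

theorem IsPiConvexInterStar.exists_segment_subset {X : Set (ι → 𝕜)}
    (hX : IsPiConvexInterStar X) {u v : ι → 𝕜} (hu : u ∈ X) (hv : v ∈ X) :
    ∃ w, segment 𝕜 u w ⊆ X ∧ segment 𝕜 w v ⊆ X := by
  obtain ⟨L, S, hL, hS, rfl⟩ := hX
  choose w hw s hs s' hs' hws hws' using
    fun j => (hL j).exists_mem_eq_mul_eq_mul (hu.1 j trivial) (hv.1 j trivial)
  have hwu : w = s * u := funext hws
  have hwv : w = s' * v := funext hws'
  have hwL : w ∈ univ.pi L := fun j _ => hw j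
  refine ⟨w, ?_, ?_⟩
  · rw [hwu] at hwL ⊢
    exact segment_mul_subset_pi_inter hL hS hu ⟨fun j => (hs j).1, fun j => (hs j).2⟩ hwL
  · rw [hwv] at hwL ⊢
    rw [segment_symm]
    exact segment_mul_subset_pi_inter hL hS hv ⟨fun j => (hs' j).1, fun j => (hs' j).2⟩ hwL

end CoordStarConvex

theorem IsRatInterval.convex {C : Set ℝ} (h : IsRatInterval C) : Convex ℝ C := by
  cases h with
  | empty => exact convex_empty
  | univ => exact convex_univ
  | Icc a b => exact convex_Icc _ _
  | Ico a b => exact convex_Ico _ _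
  | Ioc a b => exact convex_Ioc _ _
  | Ioo a b => exact convex_Ioo _ _
  | Ici a => exact convex_Ici _
  | Ioi a => exact convex_Ioi _
  | Iic a => exact convex_Iic _
  | Iio a => exact convex_Iio _

section BlowChart

variable {n : ℕ} (I : Finset (Fin n)) (i : Fin n)

theorem blowChart_apply_of_notMem {j : Fin n} (hj : j ∉ I) (y : Fin n → ℝ) :
    blowChart I i y j = y j :=
  if_neg fun h => hj h.1

theorem blowChart_mul (t p : Fin n → ℝ) :
    blowChart I i (t * p) = blowChart I i t * blowChart I i p := by
  funext j
  simp only [blowChart, Pi.mul_apply]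
  split_ifs <;> ring

theorem blowChart_mem_Icc {t : Fin n → ℝ} (ht : t ∈ Icc 0 1) : blowChart I i t ∈ Icc 0 1 := by
  refine ⟨fun j => ?_, fun j => ?_⟩ <;> dsimp only [blowChart] <;> split_ifs
  · exact mul_nonneg (ht.1 i) (ht.1 j)
  · exact ht.1 j
  · exact mul_le_one₀ (ht.2 i) (ht.1 j) (ht.2 j)
  · exact ht.2 j

variable {I i}

theorem IsCoordStarConvex.preimage_blowChart {S : Set (Fin n → ℝ)} (hS : IsCoordStarConvex S) :
    IsCoordStarConvex (blowChart I i ⁻¹' S) := fun p hp t ht => by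
  rw [mem_preimage, blowChart_mul]
  exact hS _ hp _ (blowChart_mem_Icc I i ht)

theorem IsPiConvexInterStar.preimage_blowChart {X : Set (Fin n → ℝ)}
    (hX : IsPiConvexInterStar X) (hmeet : ∃ x ∈ X, ∀ j ∈ I, x j = 0) :
    IsPiConvexInterStar (blowChart I i ⁻¹' X) := by
  obtain ⟨L, S, hL, hS, rfl⟩ := hX
  obtain ⟨z, hz, hz0⟩ := hmeet
  have h0 : ∀ j ∈ (I : Set (Fin n)), (0 : ℝ) ∈ L j := fun j hj => hz0 j hj ▸ hz.1 j trivial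
  set L' : Fin n → Set ℝ := fun j => if j ∈ I then univ else L j
  have hsplit : univ.pi L ∩ S = univ.pi L' ∩ (S ∩ (I : Set (Fin n)).pi L) := by
    ext x
    simp only [L', mem_inter_iff, mem_pi, mem_univ, true_implies, Finset.mem_coe]
    constructor
    · rintro ⟨hxL, hxS⟩
      exact ⟨fun j => by split_ifs <;> simp [hxL j], hxS, fun j _ => hxL j⟩
    · rintro ⟨hxL', hxS, hxL⟩
      refine ⟨fun j => ?_, hxS⟩
      by_cases hj : j ∈ I
      · exact hxL j hj
      · simpa [hj] using hxL' j
  refine ⟨L', blowChart I i ⁻¹' (S ∩ (I : Set (Fin n)).pi L), fun j => ?_,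
    (hS.inter (isCoordStarConvex_pi (fun j _ => hL j) h0)).preimage_blowChart, ?_⟩
  · dsimp only [L']
    split_ifs
    exacts [convex_univ, hL j]
  · rw [hsplit, preimage_inter]
    congr 1
    ext y
    simp only [L', mem_preimage, mem_pi, mem_univ, true_implies]
    refine forall_congr' fun j => ?_
    split_ifs with hj
    · simp
    · rw [blowChart_apply_of_notMem I i hj]

end BlowChart

theorem IsBlowupSet.isPiConvexInterStar {n : ℕ} {X : Set (Fin n → ℝ)} (h : IsBlowupSet X) :
    IsPiConvexInterStar X := by
  induction h with
  | box hB =>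
    obtain ⟨S, hS, rfl⟩ := hB
    exact ⟨S, univ, fun j => (hS j).convex, fun _ _ _ _ => trivial, by ext; simp [mem_pi]⟩
  | @blow X _ I _ hmeet i _ S hS ih =>
    have hY : {y | blowChart I i y ∈ X ∧ ∀ j ∈ I, y j ∈ S j}
        = blowChart I i ⁻¹' X ∩ univ.pi fun j => if j ∈ I then S j else univ := by
      ext y
      simp only [mem_ofPred_eq, mem_inter_iff, mem_preimage, mem_pi, mem_univ, true_implies]
      refine and_congr_right fun _ => forall_congr' fun j => ?_
      split_ifs with hj <;> simp [hj]
    rw [hY]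
    refine (ih.preimage_blowChart hmeet).inter_pi fun j => ?_
    split_ifs
    exacts [(hS j).convex, convex_univ]

/-- **Blowup sets are polygonally connected.**  For every blowup set `Y ⊆ ℝⁿ` and all
`x, y ∈ Y` there are finitely many points `c 0 = x, …, c N = y` such that each segment
`[c (j−1), c j]` is contained in `Y`. -/
theorem stmt10 {n : ℕ} (Y : Set (Fin n → ℝ)) (hY : IsBlowupSet Y)
    (x y : Fin n → ℝ) (hx : x ∈ Y) (hy : y ∈ Y) :
    ∃ (N : ℕ) (c : ℕ → (Fin n → ℝ)), c 0 = x ∧ c N = y ∧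
      ∀ j : ℕ, 1 ≤ j → j ≤ N → segment ℝ (c (j - 1)) (c j) ⊆ Y := by
  obtain ⟨w, hxw, hwy⟩ := hY.isPiConvexInterStar.exists_segment_subset hx hy
  refine ⟨2, fun k => if k = 0 then x else if k = 1 then w else y, rfl, rfl, fun j hj1 hj2 => ?_⟩
  interval_cases j
  exacts [hxw, hwy]
end

section
/- Let U ⊆ ℝ^n × ℝ be open, let p ∈ ℕ ∪ {∞}, and let f : U → ℝ be a C^{p+1} function (with the convention ∞ + 1 = ∞) such that f(x,0) = 0 for every x with (x,0) ∈ U. Then there exists a unique continuous function g : U → ℝ such that f(x,y) = y·g(x,y) for all (x,y) ∈ U, and this g is C^p on U. -/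
/-!
Where the vertical segment from `(x, 0)` to `(x, y)` lies in `U`, the fundamental theorem of
calculus gives Hadamard's formula `f (x, y) = y * ∫ t in 0..1, ∂f/∂y (x, t * y)`. Near the zero
section this integral depends `C^p` on `(x, y)` by differentiation under the integral sign, and
it equals `f (x, y) / y` off the zero section, where that quotient is `C^p` anyway. Uniqueness
holds because `{y ≠ 0}` is dense.
-/

open Set Filter Topology MeasureTheory

universe u

theorem IsOpen.eventually_forall_prod_mem {X Y : Type*} [TopologicalSpace X] [TopologicalSpace Y]
    {W : Set (X × Y)} (hW : IsOpen W) {K : Set Y} (hK : IsCompact K) {x₀ : X}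
    (hx₀ : ∀ y ∈ K, (x₀, y) ∈ W) : ∀ᶠ x in 𝓝 x₀, ∀ y ∈ K, (x, y) ∈ W :=
  hK.eventually_forall_of_forall_eventually fun y hy => hW.mem_nhds (hx₀ y hy)

theorem ContinuousOn.exists_eventually_forall_norm_le {X Y F : Type*} [TopologicalSpace X]
    [TopologicalSpace Y] [NormedAddCommGroup F] {H : X × Y → F} {W : Set (X × Y)}
    (hH : ContinuousOn H W) (hW : IsOpen W) {K : Set Y} (hK : IsCompact K) {x₀ : X}
    (hx₀ : ∀ y ∈ K, (x₀, y) ∈ W) :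
    ∃ C, ∀ᶠ x in 𝓝 x₀, ∀ y ∈ K, (x, y) ∈ W ∧ ‖H (x, y)‖ ≤ C := by
  obtain ⟨M, hM⟩ := hK.exists_bound_of_continuousOn
    (hH.comp (Continuous.prodMk_right x₀).continuousOn hx₀)
  refine ⟨M + 1, hK.eventually_forall_of_forall_eventually fun y hy => ?_⟩
  have hH_at : ContinuousAt H (x₀, y) := hH.continuousAt (hW.mem_nhds (hx₀ y hy))
  filter_upwards [hW.mem_nhds (hx₀ y hy),
    hH_at.norm.eventually_lt continuousAt_const ((hM y hy).trans_lt (lt_add_one M))]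
    with z hzW hz
  exact ⟨hzW, hz.le⟩

theorem ContinuousOn.intervalIntegrable_comp_prodMk {E F : Type*} [TopologicalSpace E]
    [NormedAddCommGroup F] {H : E × ℝ → F} {W : Set (E × ℝ)} (hH : ContinuousOn H W) {z : E}
    (hz : ∀ t ∈ Icc (0 : ℝ) 1, (z, t) ∈ W) :
    IntervalIntegrable (fun t => H (z, t)) volume 0 1 :=
  (hH.comp (Continuous.prodMk_right z).continuousOn hz).intervalIntegrable_of_Icc zero_le_one

theorem ContinuousOn.continuousAt_intervalIntegral {X F : Type*} [TopologicalSpace X]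
    [FirstCountableTopology X] [NormedAddCommGroup F] [NormedSpace ℝ F] {H : X × ℝ → F}
    {W : Set (X × ℝ)} {z₀ : X} (hH : ContinuousOn H W) (hW : IsOpen W)
    (hz₀ : ∀ t ∈ Icc (0 : ℝ) 1, (z₀, t) ∈ W) :
    ContinuousAt (fun z => ∫ t in (0 : ℝ)..1, H (z, t)) z₀ := by
  obtain ⟨C, hC⟩ := hH.exists_eventually_forall_norm_le hW isCompact_Icc hz₀
  refine intervalIntegral.continuousAt_of_dominated_interval (bound := fun _ => C) ?_ ?_
    intervalIntegrable_const (ae_of_all _ fun t ht => ?_)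
  · filter_upwards [hC] with z hz
    exact (hH.intervalIntegrable_comp_prodMk fun t ht => (hz t ht).1).def'.aestronglyMeasurable
  · filter_upwards [hC] with z hz
    refine ae_of_all _ fun t ht => (hz t ?_).2
    exact Ioc_subset_Icc_self (by simpa using ht)
  · rw [uIoc_of_le zero_le_one] at ht
    exact (hH.continuousAt (hW.mem_nhds (hz₀ t (Ioc_subset_Icc_self ht)))).comp (x := z₀)
      (Continuous.prodMk_left t).continuousAt

section ParametricIntegral

-- One universe for `E` and `F`: the induction step passes to the `E →L[ℝ] F`-valued integrand.

variable {E F : Type u} [NormedAddCommGroup E] [NormedSpace ℝ E]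
  [NormedAddCommGroup F] [NormedSpace ℝ F] {H : E × ℝ → F} {W : Set (E × ℝ)} {z₀ : E}

theorem ContDiffOn.hasFDerivAt_intervalIntegral (hH : ContDiffOn ℝ 1 H W) (hW : IsOpen W)
    (hz₀ : ∀ t ∈ Icc (0 : ℝ) 1, (z₀, t) ∈ W) :
    HasFDerivAt (fun z => ∫ t in (0 : ℝ)..1, H (z, t))
      (∫ t in (0 : ℝ)..1, (fderiv ℝ H (z₀, t)).comp (.inl ℝ E ℝ)) z₀ := by
  have hH' : ContinuousOn (fun w => (fderiv ℝ H w).comp (.inl ℝ E ℝ)) W :=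
    ((hH.continuousOn_fderiv_of_isOpen hW le_rfl).clm_comp continuousOn_const)
  obtain ⟨C, hC⟩ := hH'.exists_eventually_forall_norm_le hW isCompact_Icc hz₀
  refine intervalIntegral.hasFDerivAt_integral_of_dominated_of_fderiv_le (bound := fun _ => C)
    hC ?_ (hH.continuousOn.intervalIntegrable_comp_prodMk hz₀)
    (hH'.intervalIntegrable_comp_prodMk hz₀).def'.aestronglyMeasurable
    (ae_of_all _ fun t ht z hz => (hz t ?_).2) intervalIntegrable_const
    (ae_of_all _ fun t ht z hz => ?_)
  · filter_upwards [hC] with z hz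
    exact (hH.continuousOn.intervalIntegrable_comp_prodMk
      fun t ht => (hz t ht).1).def'.aestronglyMeasurable
  · exact Ioc_subset_Icc_self (by simpa using ht)
  · have hzt : (z, t) ∈ W := (hz t (Ioc_subset_Icc_self (by simpa using ht))).1
    exact ((hH.differentiableOn_one.differentiableAt (hW.mem_nhds hzt)).hasFDerivAt).comp z
      (hasFDerivAt_prodMk_left z t)

theorem ContDiffOn.contDiffAt_intervalIntegral {k : ℕ} (hH : ContDiffOn ℝ k H W)
    (hW : IsOpen W)     (hz₀ : ∀ t ∈ Icc (0 : ℝ) 1, (z₀, t) ∈ W) :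
    ContDiffAt ℝ k (fun z => ∫ t in (0 : ℝ)..1, H (z, t)) z₀ := by
  induction k generalizing F with
  | zero =>
    exact contDiffAt_zero.2 ⟨_, hW.eventually_forall_prod_mem isCompact_Icc hz₀, fun z hz =>
      (hH.continuousOn.continuousAt_intervalIntegral hW hz).continuousWithinAt⟩
  | succ k ih =>
    have hH' : ContDiffOn ℝ k (fun w => (fderiv ℝ H w).comp (.inl ℝ E ℝ)) W :=
      (hH.fderiv_of_isOpen hW (mod_cast le_rfl)).clm_comp contDiffOn_const
    have hderiv : ∀ᶠ z in 𝓝 z₀, HasFDerivAt (fun z => ∫ t in (0 : ℝ)..1, H (z, t))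
        (∫ t in (0 : ℝ)..1, (fderiv ℝ H (z, t)).comp (.inl ℝ E ℝ)) z :=
      (hW.eventually_forall_prod_mem isCompact_Icc hz₀).mono fun z hz =>
        (hH.of_le (mod_cast le_add_self)).hasFDerivAt_intervalIntegral hW hz
    exact contDiffAt_succ_iff_hasFDerivAt.2 ⟨_, ⟨_, hderiv, fun _ => id⟩, ih hH'⟩

end ParametricIntegral

theorem IsOpen.eventually_forall_Icc_mul_snd_mem {X : Type*} [TopologicalSpace X]
    {U : Set (X × ℝ)} (hU : IsOpen U) {x : X} (hx : (x, 0) ∈ U) :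
    ∀ᶠ q in 𝓝 (x, 0), ∀ t ∈ Icc (0 : ℝ) 1, (q.1, t * q.2) ∈ U :=
  have hline : Continuous fun w : (X × ℝ) × ℝ => (w.1.1, w.2 * w.1.2) := by fun_prop
  (hU.preimage hline).eventually_forall_prod_mem isCompact_Icc fun t _ => by simpa using hx

section DivSnd

variable {E F : Type u} [NormedAddCommGroup E] [NormedSpace ℝ E] [NormedAddCommGroup F]
  [NormedSpace ℝ F] {f : E × ℝ → F} {U : Set (E × ℝ)}

noncomputable def divSnd (f : E × ℝ → F) (q : E × ℝ) : F :=
  if q.2 = 0 then fderiv ℝ f q (0, 1) else q.2⁻¹ • f q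

noncomputable def divSndIntegral (f : E × ℝ → F) (q : E × ℝ) : F :=
  ∫ t in (0 : ℝ)..1, fderiv ℝ f (q.1, t * q.2) (0, 1)

theorem eq_snd_smul_divSnd (h0 : ∀ x : E, (x, (0 : ℝ)) ∈ U → f (x, 0) = 0) {q : E × ℝ}
    (hq : q ∈ U) : f q = q.2 • divSnd f q := by
  obtain ⟨x, y⟩ := q
  rcases eq_or_ne y 0 with rfl | hy
  · simp [h0 x hq]
  · simp [divSnd, hy, smul_inv_smul₀]

theorem ContDiffOn.contDiffAt_divSndIntegral {k : ℕ} (hf : ContDiffOn ℝ (k + 1) f U)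
    (hU : IsOpen U) {x : E} (hx : (x, 0) ∈ U) : ContDiffAt ℝ k (divSndIntegral f) (x, 0) := by
  have hline : ContDiff ℝ k fun w : (E × ℝ) × ℝ => (w.1.1, w.2 * w.1.2) := by fun_prop
  exact ContDiffOn.contDiffAt_intervalIntegral
    (((hf.fderiv_of_isOpen hU le_rfl).clm_apply contDiffOn_const).comp hline.contDiffOn
      (mapsTo_preimage _ U))
    (hU.preimage hline.continuous) fun t _ => by simpa using hx

variable [CompleteSpace F]

theorem ContDiffOn.eq_snd_smul_divSndIntegral (hf : ContDiffOn ℝ 1 f U) (hU : IsOpen U)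
    {q : E × ℝ} (hseg : ∀ t ∈ Icc (0 : ℝ) 1, (q.1, t * q.2) ∈ U) (h0 : f (q.1, 0) = 0) :
    f q = q.2 • divSndIntegral f q := by
  obtain ⟨x, y⟩ := q
  have hderiv : ∀ t ∈ uIcc (0 : ℝ) 1,
      HasDerivAt (fun t => f (x, t * y)) (y • fderiv ℝ f (x, t * y) (0, 1)) t := by
    intro t ht
    rw [uIcc_of_le zero_le_one] at ht
    have hline : HasDerivAt (fun t : ℝ => (x, t * y)) (y • ((0 : E), (1 : ℝ))) t := by
      simpa using (hasDerivAt_const t x).prodMk ((hasDerivAt_id t).mul_const y)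
    have := ((hf.differentiableOn one_ne_zero).differentiableAt
      (hU.mem_nhds (hseg t ht))).hasFDerivAt.comp_hasDerivAt t hline
    rwa [map_smul] at this
  have hcont : ContinuousOn (fun t : ℝ => fderiv ℝ f (x, t * y) (0, 1)) (Icc 0 1) :=
    ((hf.continuousOn_fderiv_of_isOpen hU le_rfl).clm_apply continuousOn_const).comp
      (by fun_prop) hseg
  have hftc := intervalIntegral.integral_eq_sub_of_hasDerivAt hderiv
    ((hcont.const_smul y).intervalIntegrable_of_Icc zero_le_one)
  simp only [intervalIntegral.integral_smul, one_mul, zero_mul, h0, sub_zero] at hftc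
  exact hftc.symm

theorem ContDiffOn.divSnd_eq_divSndIntegral (hf : ContDiffOn ℝ 1 f U) (hU : IsOpen U)
    {q : E × ℝ} (hseg : ∀ t ∈ Icc (0 : ℝ) 1, (q.1, t * q.2) ∈ U) (h0 : f (q.1, 0) = 0) :
    divSnd f q = divSndIntegral f q := by
  obtain ⟨x, y⟩ := q
  rcases eq_or_ne y 0 with rfl | hy
  · simp [divSnd, divSndIntegral]
  · rw [divSnd, if_neg hy, hf.eq_snd_smul_divSndIntegral hU hseg h0, inv_smul_smul₀ hy]

theorem ContDiffOn.contDiffOn_divSnd {k : ℕ} (hf : ContDiffOn ℝ (k + 1) f U) (hU : IsOpen U)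
    (h0 : ∀ x : E, (x, (0 : ℝ)) ∈ U → f (x, 0) = 0) : ContDiffOn ℝ k (divSnd f) U := by
  rintro ⟨x, y⟩ hq
  refine ContDiffAt.contDiffWithinAt ?_
  rcases eq_or_ne y 0 with rfl | hy
  · refine (hf.contDiffAt_divSndIntegral hU hq).congr_of_eventuallyEq ?_
    filter_upwards [hU.eventually_forall_Icc_mul_snd_mem hq] with q hseg
    exact (hf.of_le (mod_cast le_add_self)).divSnd_eq_divSndIntegral hU hseg
      (h0 q.1 (by simpa using hseg 0 (by simp)))
  · have hquot : divSnd f =ᶠ[𝓝 (x, y)] fun q => q.2⁻¹ • f q :=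
      eventuallyEq_of_mem ((isOpen_ne_fun continuous_snd continuous_const).mem_nhds hy)
        fun _ hq => if_neg hq
    exact ((contDiffAt_snd.inv hy).smul ((hf.contDiffAt (hU.mem_nhds hq)).of_le
      (mod_cast le_self_add))).congr_of_eventuallyEq hquot

end DivSnd

theorem eqOn_of_forall_snd_smul_eq {X F : Type*} [TopologicalSpace X] [NormedAddCommGroup F]
    [NormedSpace ℝ F] {U : Set (X × ℝ)} (hU : IsOpen U) {g g' : X × ℝ → F}
    (hg : ContinuousOn g U) (hg' : ContinuousOn g' U)
    (h : ∀ q ∈ U, q.2 • g q = q.2 • g' q) :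
    EqOn g g' U := by
  have hdense : Dense {q : X × ℝ | q.2 ≠ 0} :=
    (dense_compl_singleton (0 : ℝ)).preimage isOpenMap_snd
  have hoff : EqOn g g' (U ∩ {q | q.2 ≠ 0}) := fun q hq =>
    smul_right_injective F hq.2 (h q hq.1)
  exact hoff.of_subset_closure hg hg' inter_subset_left fun q hq =>
    hU.inter_closure ⟨hq, hdense.closure_eq ▸ mem_univ q⟩

/-- **Division by a variable.**  Let `U ⊆ ℝⁿ × ℝ` be open, `p ∈ ℕ ∪ {∞}`, and let `f` be
`C^{p+1}` on `U` (with `∞ + 1 = ∞`) with `f(x,0) = 0` whenever `(x,0) ∈ U`.  Then there is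
a unique continuous function `g` on `U` with `f(x,y) = y·g(x,y)` on `U`, and `g` is `C^p`
on `U`. -/
theorem stmt12 {n : ℕ} (U : Set ((Fin n → ℝ) × ℝ)) (hU : IsOpen U) (p : ℕ∞)
    (f : (Fin n → ℝ) × ℝ → ℝ) (hf : ContDiffOn ℝ (p + 1) f U)
    (h0 : ∀ x : Fin n → ℝ, (x, (0 : ℝ)) ∈ U → f (x, 0) = 0) :
    ∃ g : (Fin n → ℝ) × ℝ → ℝ,
      ContinuousOn g U ∧
      (∀ q ∈ U, f q = q.2 * g q) ∧
      ContDiffOn ℝ p g U ∧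
      ∀ g' : (Fin n → ℝ) × ℝ → ℝ, ContinuousOn g' U → (∀ q ∈ U, f q = q.2 * g' q) →
        ∀ q ∈ U, g' q = g q := by
  have hg : ContDiffOn ℝ p (divSnd f) U := contDiffOn_iff_forall_nat_le.2 fun m hm =>
    (hf.of_le (by gcongr; exact_mod_cast hm)).contDiffOn_divSnd hU h0
  have hfg : ∀ q ∈ U, f q = q.2 * divSnd f q := fun q hq => eq_snd_smul_divSnd h0 hq
  refine ⟨divSnd f, hg.continuousOn, hfg, hg, fun g' hg' hfg' => ?_⟩
  exact eqOn_of_forall_snd_smul_eq hU hg' hg.continuousOn fun q hq =>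
    (hfg' q hq).symm.trans (hfg q hq)
end

section
/- Let f : ℝ → ℝ be C^∞ and let a ≤ b be real numbers. Suppose that for every c ∈ [a,b] there exists k ∈ ℕ with f^{(k)}(c) ≠ 0 (i.e., the Taylor series of f at c is nonzero). Then the set {x ∈ [a,b] : f(x) = 0} is finite. -/
/-!
If the zero set of `f` in `[a, b]` were infinite, by compactness the zeros would accumulate at some
`c ∈ [a, b]`. Rolle's theorem puts a zero of `f'` strictly between any two zeros of `f`, so the zeros
of every derivative `f^{(k)}` also accumulate at `c`, and by continuity all of them vanish at `c`.
-/

open Filter Set Topology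

lemma eq_zero_of_frequently_nhdsNE_eq_zero {g : ℝ → ℝ} {c : ℝ} (hg : ContinuousAt g c)
    (h : ∃ᶠ x in 𝓝[≠] c, g x = 0) : g c = 0 :=
  isClosed_singleton.mem_of_frequently_of_tendsto h (hg.tendsto.mono_left nhdsWithin_le_nhds)

lemma exists_deriv_eq_zero_mem_uIoo {g : ℝ → ℝ} {a b : ℝ} (hab : a ≠ b)
    (hg : ContinuousOn g (uIcc a b)) (hgab : g a = g b) : ∃ y ∈ uIoo a b, deriv g y = 0 := by
  rcases hab.lt_or_gt with hlt | hgt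
  · rw [uIoo_of_lt hlt]
    exact exists_deriv_eq_zero hlt (by rwa [uIcc_of_lt hlt] at hg) hgab
  · rw [uIoo_of_gt hgt]
    exact exists_deriv_eq_zero hgt (by rwa [uIcc_of_gt hgt] at hg) hgab.symm

lemma frequently_deriv_eq_zero_of_frequently_eq_zero {g : ℝ → ℝ} {c : ℝ} (hg : Continuous g)
    (h : ∃ᶠ x in 𝓝[≠] c, g x = 0) : ∃ᶠ x in 𝓝[≠] c, deriv g x = 0 := by
  have hgc := eq_zero_of_frequently_nhdsNE_eq_zero hg.continuousAt h
  rw [(nhdsWithin_hasBasis Metric.nhds_basis_ball _).frequently_iff] at h ⊢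
  intro ε hε
  obtain ⟨x, ⟨hxε, hxc⟩, hx⟩ := h ε hε
  obtain ⟨y, hy, hy0⟩ :=
    exists_deriv_eq_zero_mem_uIoo (Ne.symm hxc) hg.continuousOn (hgc.trans hx.symm)
  have hyε : y ∈ Metric.ball c ε :=
    (Real.ball_eq_Ioo c ε ▸ ordConnected_Ioo).uIcc_subset (Metric.mem_ball_self hε) hxε
      (uIoo_subset_uIcc_self hy)
  exact ⟨y, ⟨hyε, fun hyc => left_notMem_uIoo (hyc ▸ hy)⟩, hy0⟩

lemma ContDiff.frequently_iteratedDeriv_eq_zero {f : ℝ → ℝ} {c : ℝ} (hf : ContDiff ℝ (⊤ : ℕ∞) f)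
    (h : ∃ᶠ x in 𝓝[≠] c, f x = 0) (k : ℕ) : ∃ᶠ x in 𝓝[≠] c, iteratedDeriv k f x = 0 := by
  induction k with
  | zero => simpa using h
  | succ k ih =>
    simpa only [iteratedDeriv_succ] using frequently_deriv_eq_zero_of_frequently_eq_zero
      (hf.continuous_iteratedDeriv k (by exact_mod_cast le_top)) ih

lemma ContDiff.iteratedDeriv_eq_zero_of_frequently_eq_zero {f : ℝ → ℝ} {c : ℝ}
    (hf : ContDiff ℝ (⊤ : ℕ∞) f) (h : ∃ᶠ x in 𝓝[≠] c, f x = 0) (k : ℕ) : iteratedDeriv k f c = 0 :=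
  eq_zero_of_frequently_nhdsNE_eq_zero
    (hf.continuous_iteratedDeriv k (by exact_mod_cast le_top)).continuousAt
    (hf.frequently_iteratedDeriv_eq_zero h k)

theorem stmt13_general (f : ℝ → ℝ) (hf : ContDiff ℝ (⊤ : ℕ∞) f) (a b : ℝ)
    (h : ∀ c ∈ Set.Icc a b, ∃ k : ℕ, iteratedDeriv k f c ≠ 0) :
    {x ∈ Set.Icc a b | f x = 0}.Finite := by
  by_contra hinf
  obtain ⟨c, hc, hacc⟩ := Set.Infinite.exists_accPt_of_subset_isCompact hinf isCompact_Icc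
    (sep_subset _ _)
  have hzeros : ∃ᶠ x in 𝓝[≠] c, f x = 0 :=
    (accPt_iff_frequently_nhdsNE.mp hacc).mono fun _ hx => hx.2
  obtain ⟨k, hk⟩ := h c hc
  exact hk (hf.iteratedDeriv_eq_zero_of_frequently_eq_zero hzeros k)

/-- **Finiteness of zeros under nonvanishing Taylor series.**  Let `f : ℝ → ℝ` be `C^∞` and
`a ≤ b`.  If for every `c ∈ [a,b]` some iterated derivative `f^{(k)}(c)` is nonzero, then
`{x ∈ [a,b] : f(x) = 0}` is finite. -/
theorem stmt13 (f : ℝ → ℝ) (hf : ContDiff ℝ (⊤ : ℕ∞) f) (a b : ℝ) (hab : a ≤ b)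
    (h : ∀ c ∈ Set.Icc a b, ∃ k : ℕ, iteratedDeriv k f c ≠ 0) :
    {x ∈ Set.Icc a b | f x = 0}.Finite :=
  stmt13_general f hf a b h
end

section
/- Let U ⊆ ℝ^n be open, let d ∈ {0,…,n}, and let f : U → ℝ^{n−d} be real-analytic such that M := {x ∈ U : f(x) = 0} is nonempty and the Jacobian ∂f/∂x has rank n−d at every point of M. Let Π : ℝ^n → ℝ^d and Π' : ℝ^n → ℝ^{n−d} be complementary coordinate projections, and write x = (y,y') with y = Π(x) and y' = Π'(x). Then Π is a good direction for M if and only if Π is injective on M and det(∂f/∂y') ≠ 0 at every point of M. -/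
/-!
Π is a good direction exactly when it is injective on `M` and `M` has, through every point `a`,
an analytic local section `s` of Π (`Π ∘ s = id` near `Π a`, `s (Π a) = a`). With `L = Df(a)`,
which is onto, the matrix `∂f/∂y'` is `L` restricted to `ker Π`, so `det ≠ 0` iff
`ker Π ⊓ ker L = ⊥`, i.e. iff `(Π, L)` is a linear isomorphism. In that case the analytic inverse
function theorem for `x ↦ (Π x, f x)` yields the section `y ↦ (Π, f)⁻¹ (y, 0)`. Conversely,
differentiating `Π ∘ s = id` and `f ∘ s = 0` shows that `Ds` is injective with image in `ker L`;
since `dim ker L = d`, that image is all of `ker L`, which therefore meets `ker Π` only in `0`.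
-/

open Function Filter Topology Module Matrix
open LinearMap (ker range)

def IsGoodDirection {E : Type*} [NormedAddCommGroup E] [NormedSpace ℝ E] {d : ℕ}
    (π : E → (Fin d → ℝ)) (M : Set E) : Prop :=
  IsOpen (π '' M) ∧ Set.InjOn π M ∧
    ∃ F : (Fin d → ℝ) → E, (∀ y ∈ π '' M, AnalyticAt ℝ F y) ∧ ∀ x ∈ M, F (π x) = x

theorem LinearMap.ker_inf_ker_eq_bot_of_comp_eq {K V W X : Type*} [Field K]
    [AddCommGroup V] [Module K V] [AddCommGroup W] [Module K W] [AddCommGroup X] [Module K X]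
    {P : V →ₗ[K] W} {L : V →ₗ[K] X} {S : W →ₗ[K] V} [FiniteDimensional K (ker L)]
    (hPS : P ∘ₗ S = LinearMap.id) (hLS : L ∘ₗ S = 0)
    (hdim : finrank K (ker L) ≤ finrank K W) :
    ker P ⊓ ker L = ⊥ := by
  have hS : LeftInverse P S := LinearMap.congr_fun hPS
  have hrange : range S = ker L := by
    refine Submodule.eq_of_le_of_finrank_le ?_ ?_
    · rintro _ ⟨w, rfl⟩
      exact LinearMap.congr_fun hLS w
    · rwa [LinearMap.finrank_range_of_inj hS.injective]
  refine eq_bot_iff.2 fun v hv => ?_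
  obtain ⟨hPv, hLv⟩ := Submodule.mem_inf.1 hv
  obtain ⟨w, rfl⟩ : v ∈ range S := hrange ▸ hLv
  rw [LinearMap.mem_ker, hS w] at hPv
  simp [hPv]

section LocalAnalyticSection

variable {𝕜 E F G : Type*} [NontriviallyNormedField 𝕜]
  [NormedAddCommGroup E] [NormedSpace 𝕜 E] [NormedAddCommGroup F] [NormedSpace 𝕜 F]
  [NormedAddCommGroup G] [NormedSpace 𝕜 G]

variable (𝕜) in
def IsLocalAnalyticSection (π : E → F) (M : Set E) (a : E) (s : F → E) : Prop :=
  s (π a) = a ∧ AnalyticAt 𝕜 s (π a) ∧ ∀ᶠ y in 𝓝 (π a), s y ∈ M ∧ π (s y) = y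

theorem IsLocalAnalyticSection.ker_inf_ker_fderiv_eq_bot {P : E →L[𝕜] F} {f : E → G}
    {M : Set E} {a : E} {s : F → E} (hs : IsLocalAnalyticSection 𝕜 P M a s)
    (hfM : Set.EqOn f 0 M) (hf : DifferentiableAt 𝕜 f a)
    [FiniteDimensional 𝕜 (ker (fderiv 𝕜 f a : E →ₗ[𝕜] G))]
    (hdim : finrank 𝕜 (ker (fderiv 𝕜 f a : E →ₗ[𝕜] G)) ≤ finrank 𝕜 F) :
    ker (P : E →ₗ[𝕜] F) ⊓ ker (fderiv 𝕜 f a : E →ₗ[𝕜] G) = ⊥ := by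
  obtain ⟨hsa, hsan, hs⟩ := hs
  have hds := hsan.differentiableAt.hasFDerivAt
  set S := fderiv 𝕜 s (P a)
  have hPS : P.comp S = ContinuousLinearMap.id 𝕜 F :=
    (P.hasFDerivAt.comp _ hds).unique <|
      (hasFDerivAt_id _).congr_of_eventuallyEq (hs.mono fun y hy => hy.2)
  have hf' : HasFDerivAt f (fderiv 𝕜 f a) (s (P a)) := by rw [hsa]; exact hf.hasFDerivAt
  have hfS : (fderiv 𝕜 f a).comp S = 0 :=
    (hf'.comp _ hds).unique <|
      (hasFDerivAt_const 0 _).congr_of_eventuallyEq (hs.mono fun y hy => hfM hy.1)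
  exact LinearMap.ker_inf_ker_eq_bot_of_comp_eq (S := S)
    (congrArg ContinuousLinearMap.toLinearMap hPS) (congrArg ContinuousLinearMap.toLinearMap hfS)
    hdim

theorem HasStrictFDerivAt.analyticAt_localInverse [CompleteSpace E] {f : E → F}
    {f' : E ≃L[𝕜] F} {a : E} (hf : HasStrictFDerivAt f (f' : E →L[𝕜] F) a)
    (hfa : AnalyticAt 𝕜 f a) :
    AnalyticAt 𝕜 (hf.localInverse f f' a) (f a) :=
  (hf.toOpenPartialHomeomorph f).analyticAt_symm' hf.mem_toOpenPartialHomeomorph_source hfa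
    hf.hasFDerivAt.fderiv

theorem exists_isLocalAnalyticSection [CompleteSpace E] [CompleteSpace F] [CompleteSpace G]
    {P : E →L[𝕜] F} {f : E → G} {U : Set E} {a : E} (hU : U ∈ 𝓝 a) (hf : AnalyticAt 𝕜 f a)
    (hfa : f a = 0) (hbij : Bijective (P.prod (fderiv 𝕜 f a))) :
    ∃ s, IsLocalAnalyticSection 𝕜 P {x ∈ U | f x = 0} a s := by
  let e := ContinuousLinearEquiv.ofBijective (P.prod (fderiv 𝕜 f a))
    (LinearMap.ker_eq_bot.2 hbij.1) (LinearMap.range_eq_top.2 hbij.2)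
  have hG : HasStrictFDerivAt (fun x => (P x, f x)) (e : E →L[𝕜] F × G) a :=
    P.hasStrictFDerivAt.prodMk hf.hasStrictFDerivAt
  have hGa : (P a, f a) = (P a, 0) := by rw [hfa]
  set g := hG.localInverse _ _ _
  have hga : g (P a, 0) = a := hGa ▸ hG.localInverse_apply_image
  have hslice : Tendsto (fun y => (y, (0 : G))) (𝓝 (P a)) (𝓝 (P a, f a)) :=
    hGa ▸ (continuous_id.prodMk continuous_const).tendsto _
  refine ⟨fun y => g (y, 0), hga, ?_, ?_⟩
  · have hgan : AnalyticAt 𝕜 g (P a, 0) :=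
      hGa ▸ hG.analyticAt_localInverse ((P.analyticAt a).prod hf)
    exact hgan.comp (f := fun y => (y, 0)) (analyticAt_id.prod analyticAt_const)
  · have hgU : ∀ᶠ z in 𝓝 (P a, f a), g z ∈ U :=
      hG.localInverse_continuousAt.preimage_mem_nhds (by rwa [hG.localInverse_apply_image])
    filter_upwards [hslice.eventually hG.eventually_right_inverse, hslice.eventually hgU]
      with y hy hyU
    exact ⟨⟨hyU, congrArg Prod.snd hy⟩, congrArg Prod.fst hy⟩

theorem exists_isLocalAnalyticSection_iff [FiniteDimensional 𝕜 E] [FiniteDimensional 𝕜 F]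
    [FiniteDimensional 𝕜 G] [CompleteSpace E] [CompleteSpace F] [CompleteSpace G]
    {P : E →L[𝕜] F} {f : E → G} {U : Set E} {a : E} (hU : U ∈ 𝓝 a) (hf : AnalyticAt 𝕜 f a)
    (hfa : f a = 0) (hsurj : Surjective (fderiv 𝕜 f a))
    (hdim : finrank 𝕜 E = finrank 𝕜 F + finrank 𝕜 G) :
    (∃ s, IsLocalAnalyticSection 𝕜 P {x ∈ U | f x = 0} a s) ↔
      ker (P : E →ₗ[𝕜] F) ⊓ ker (fderiv 𝕜 f a : E →ₗ[𝕜] G) = ⊥ := by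
  have hker : finrank 𝕜 (ker (fderiv 𝕜 f a : E →ₗ[𝕜] G)) = finrank 𝕜 F := by
    have := LinearMap.finrank_range_add_finrank_ker (fderiv 𝕜 f a : E →ₗ[𝕜] G)
    rw [LinearMap.range_eq_top.2 hsurj, finrank_top] at this
    omega
  refine ⟨fun ⟨s, hs⟩ => hs.ker_inf_ker_fderiv_eq_bot (fun x hx => hx.2) hf.differentiableAt
    hker.le, fun h => exists_isLocalAnalyticSection hU hf hfa ?_⟩
  have hinj : Injective (P.prod (fderiv 𝕜 f a)) := by
    rw [← ContinuousLinearMap.coe_coe, ← LinearMap.ker_eq_bot, ContinuousLinearMap.ker_prod]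
    exact h
  exact ⟨hinj, (LinearMap.injective_iff_surjective_of_finrank_eq_finrank
    (by rw [hdim, finrank_prod])).1 hinj⟩

end LocalAnalyticSection

theorem isGoodDirection_iff {d : ℕ} {E : Type*} [NormedAddCommGroup E] [NormedSpace ℝ E]
    {π : E → Fin d → ℝ} {M : Set E} :
    IsGoodDirection π M ↔ Set.InjOn π M ∧ ∀ a ∈ M, ∃ s, IsLocalAnalyticSection ℝ π M a s := by
  constructor
  · rintro ⟨hopen, hinj, F, hFan, hFeq⟩
    refine ⟨hinj, fun a ha => ⟨F, hFeq a ha, hFan _ (Set.mem_image_of_mem π ha), ?_⟩⟩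
    filter_upwards [hopen.mem_nhds (Set.mem_image_of_mem π ha)]
    rintro _ ⟨x, hx, rfl⟩
    rw [hFeq x hx]
    exact ⟨hx, rfl⟩
  · rintro ⟨hinj, hsection⟩
    have hinv : ∀ a ∈ M, ∃ s, AnalyticAt ℝ s (π a) ∧
        ∀ᶠ y in 𝓝 (π a), y ∈ π '' M ∧ invFunOn π M y = s y := by
      intro a ha
      obtain ⟨s, -, hsan, hs⟩ := hsection a ha
      refine ⟨s, hsan, hs.mono fun y ⟨hsM, hsy⟩ => ⟨⟨s y, hsM, hsy⟩, ?_⟩⟩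
      rw [← hsy, hinj.leftInvOn_invFunOn hsM, hsy]
    refine ⟨isOpen_iff_mem_nhds.2 ?_, hinj, invFunOn π M, ?_,
      fun x hx => hinj.leftInvOn_invFunOn hx⟩
    · rintro _ ⟨a, ha, rfl⟩
      obtain ⟨s, -, hs⟩ := hinv a ha
      exact hs.mono fun y hy => hy.1
    · rintro _ ⟨a, ha, rfl⟩
      obtain ⟨s, hsan, hs⟩ := hinv a ha
      exact hsan.congr (hs.mono fun y hy => hy.2.symm)

section Coordinates

variable {K ι κ μ : Type*} [Field K] [DecidableEq ι] [Fintype μ] {lam : κ → ι} {lam' : μ → ι}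

theorem sum_single_add_sum_single [Fintype ι] [Fintype κ] (hσ : Bijective (Sum.elim lam lam'))
    (v : ι → K) :
    ∑ t, Pi.single (lam t) (v (lam t)) + ∑ j, Pi.single (lam' j) (v (lam' j)) = v := by
  conv_rhs => rw [← Finset.univ_sum_single v, ← (Equiv.ofBijective _ hσ).sum_comp]
  rw [Fintype.sum_sum_type]
  rfl

theorem sum_single_apply_right (hσ : Bijective (Sum.elim lam lam')) (u : μ → K) (j : μ) :
    (∑ j', Pi.single (lam' j') (u j') : ι → K) (lam' j) = u j := by
  classical
  have hlam' : Injective lam' := hσ.1.comp Sum.inr_injective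
  simp [Finset.sum_apply, Pi.single_apply, hlam'.eq_iff]

theorem sum_single_apply_left (hσ : Bijective (Sum.elim lam lam')) (u : μ → K) (t : κ) :
    (∑ j, Pi.single (lam' j) (u j) : ι → K) (lam t) = 0 := by
  refine (Finset.sum_apply _ _ _).trans (Finset.sum_eq_zero fun j _ => Pi.single_eq_of_ne ?_ _)
  exact fun h => Sum.inl_ne_inr (hσ.1 h)

theorem det_ne_zero_iff_ker_funLeft_inf_ker_eq_bot [Fintype ι] [Fintype κ] [DecidableEq μ]
    (hσ : Bijective (Sum.elim lam lam')) (L : (ι → K) →ₗ[K] μ → K) :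
    (Matrix.of fun i j => L (Pi.single (lam' j) 1) i).det ≠ 0 ↔
      ker (LinearMap.funLeft K K lam) ⊓ ker L = ⊥ := by
  have hA : ∀ u, (Matrix.of fun i j => L (Pi.single (lam' j) 1) i) *ᵥ u =
      L (∑ j, Pi.single (lam' j) (u j)) := by
    intro u
    ext i
    simp only [mulVec, dotProduct, of_apply, map_sum, Finset.sum_apply]
    refine Finset.sum_congr rfl fun j _ => ?_
    rw [mul_comm, ← smul_eq_mul, ← Pi.smul_apply, ← map_smul, ← Pi.single_smul', smul_eq_mul,
      mul_one]
  rw [Ne, ← Matrix.exists_mulVec_eq_zero_iff, eq_bot_iff]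
  constructor
  · intro h v hv
    obtain ⟨hvP, hvL⟩ := Submodule.mem_inf.1 hv
    have hvlam : ∀ t, v (lam t) = 0 := congrFun hvP
    have hv_eq : ∑ j, Pi.single (lam' j) (v (lam' j)) = v := by
      simpa [hvlam] using sum_single_add_sum_single hσ v
    have hv' : (fun j => v (lam' j)) = 0 := by
      by_contra hne
      exact h ⟨_, hne, by rw [hA, hv_eq]; exact hvL⟩
    rw [Submodule.mem_bot, ← hv_eq]
    simp [congrFun hv']
  · rintro h ⟨u, hu, hAu⟩
    set w : ι → K := ∑ j, Pi.single (lam' j) (u j)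
    have hw : w ∈ ker (LinearMap.funLeft K K lam) ⊓ ker L :=
      ⟨funext (sum_single_apply_left hσ u), (hA u).symm.trans hAu⟩
    have hw0 : w = 0 := (Submodule.mem_bot K).1 (h hw)
    exact hu (funext fun j => by rw [← sum_single_apply_right hσ u j]; exact congrFun hw0 (lam' j))

end Coordinates

theorem bijective_sum_elim_of_range_union_eq_univ {α β γ : Type*} [Fintype α] [Fintype β]
    [Fintype γ] {f : α → γ} {g : β → γ} (hfg : Set.range f ∪ Set.range g = Set.univ)
    (hcard : Fintype.card α + Fintype.card β = Fintype.card γ) : Bijective (Sum.elim f g) := by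
  rw [Fintype.bijective_iff_surjective_and_card, ← Set.range_eq_univ, Set.Sum.elim_range,
    Fintype.card_sum]
  exact ⟨hfg, hcard⟩

theorem surjective_fderiv_iff_rank_jacobian {𝕜 ι μ : Type*} [NontriviallyNormedField 𝕜]
    [Fintype ι] [DecidableEq ι] [Fintype μ] {f : (ι → 𝕜) → μ → 𝕜} {x : ι → 𝕜}
    (hf : DifferentiableAt 𝕜 f x) :
    Surjective (fderiv 𝕜 f x) ↔
      (Matrix.of fun i j => fderiv 𝕜 (fun z => f z i) x (Pi.single j 1)).rank =
        Fintype.card μ := by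
  have hjac : (Matrix.of fun i j => fderiv 𝕜 (fun z => f z i) x (Pi.single j 1)) =
      LinearMap.toMatrix' (fderiv 𝕜 f x : (ι → 𝕜) →ₗ[𝕜] μ → 𝕜) := by
    ext i j
    simp only [of_apply, LinearMap.toMatrix'_apply, fderiv_apply hf]
    rfl
  rw [hjac, Matrix.rank, ← Matrix.toLin'_apply', Matrix.toLin'_toMatrix',
    ← ContinuousLinearMap.coe_coe, ← LinearMap.range_eq_top, ← finrank_fintype_fun_eq_card 𝕜]
  exact ⟨fun h => by rw [h, finrank_top], Submodule.eq_top_of_finrank_eq⟩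

theorem stmt17_general {n d : ℕ} (hd : d ≤ n)
    (U : Set (Fin n → ℝ)) (hU : IsOpen U)
    (f : (Fin n → ℝ) → Fin (n - d) → ℝ)
    (hf : ∀ x ∈ U, AnalyticAt ℝ f x)
    (lam : Fin d → Fin n) (lam' : Fin (n - d) → Fin n)
    (hcompl : Set.range lam ∪ Set.range lam' = Set.univ)
    (hfRank : ∀ x ∈ {x ∈ U | f x = 0},
      (Matrix.of fun (i : Fin (n - d)) (j : Fin n) =>
        fderiv ℝ (fun z => f z i) x (Pi.single j 1)).rank = n - d) :
    IsGoodDirection (fun x i => x (lam i)) {x ∈ U | f x = 0} ↔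
      (Set.InjOn (fun x i => x (lam i)) {x ∈ U | f x = 0} ∧
        ∀ x ∈ {x ∈ U | f x = 0},
          (Matrix.of fun i j : Fin (n - d) =>
            fderiv ℝ (fun z => f z i) x (Pi.single (lam' j) 1)).det ≠ 0) := by
  have hσ : Bijective (Sum.elim lam lam') :=
    bijective_sum_elim_of_range_union_eq_univ hcompl (by simp only [Fintype.card_fin]; omega)
  have hdim : finrank ℝ (Fin n → ℝ) = finrank ℝ (Fin d → ℝ) + finrank ℝ (Fin (n - d) → ℝ) := by
    simp only [finrank_fin_fun]
    omega
  let P : (Fin n → ℝ) →L[ℝ] Fin d → ℝ := ContinuousLinearMap.pi fun i => .proj (lam i)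
  change IsGoodDirection P _ ↔ Set.InjOn P _ ∧ _
  rw [isGoodDirection_iff]
  refine and_congr_right fun _ => forall₂_congr fun x hx => ?_
  have hfx := (hf x hx.1).differentiableAt
  have hsurj : Surjective (fderiv ℝ f x) :=
    (surjective_fderiv_iff_rank_jacobian hfx).2 (by simpa using hfRank x hx)
  rw [exists_isLocalAnalyticSection_iff (hU.mem_nhds hx.1) (hf x hx.1) hx.2 hsurj hdim]
  simp only [fderiv_apply hfx]
  exact (det_ne_zero_iff_ker_funLeft_inf_ker_eq_bot hσ _).symm

/-- **Characterization of good directions.**  Let `U ⊆ ℝⁿ` be open, `d ≤ n`, and let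
`f : U → ℝ^{n−d}` be real-analytic with nonempty zero set `M` on which the Jacobian
`∂f/∂x` has rank `n−d`.  For complementary coordinate projections `Π = Π_λ : ℝⁿ → ℝ^d`
and `Π' = Π_{λ'} : ℝⁿ → ℝ^{n−d}`, the projection `Π` is a good direction for `M` iff
`Π` is injective on `M` and `det(∂f/∂y') ≠ 0` at every point of `M`. -/
theorem stmt17 {n d : ℕ} (hd : d ≤ n)
    (U : Set (Fin n → ℝ)) (hU : IsOpen U)
    (f : (Fin n → ℝ) → Fin (n - d) → ℝ)
    (hf : ∀ x ∈ U, AnalyticAt ℝ f x)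
    (hMne : {x ∈ U | f x = 0}.Nonempty)
    (lam : Fin d → Fin n) (lam' : Fin (n - d) → Fin n)
    (hlam : Function.Injective lam) (hlam' : Function.Injective lam')
    (hcompl : Set.range lam ∪ Set.range lam' = Set.univ)
    (hfRank : ∀ x ∈ {x ∈ U | f x = 0},
      (Matrix.of fun (i : Fin (n - d)) (j : Fin n) =>
        fderiv ℝ (fun z => f z i) x (Pi.single j 1)).rank = n - d) :
    IsGoodDirection (fun x i => x (lam i)) {x ∈ U | f x = 0} ↔
      (Set.InjOn (fun x i => x (lam i)) {x ∈ U | f x = 0} ∧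
        ∀ x ∈ {x ∈ U | f x = 0},
          (Matrix.of fun i j : Fin (n - d) =>
            fderiv ℝ (fun z => f z i) x (Pi.single (lam' j) 1)).det ≠ 0) :=
  stmt17_general hd U hU f hf lam lam' hcompl hfRank
end

section
/- Let m, n, p, d, e ∈ ℕ with d ≤ p ≤ min(m,n), d ≤ m and e ≤ n. Let U_X ⊆ ℝ^m and U_Y ⊆ ℝ^n be open, let f : U_X → ℝ^{m−d} and g : U_Y → ℝ^{n−e} be real-analytic, and set M = {x ∈ U_X : f(x) = 0} and N = {y ∈ U_Y : g(y) = 0}; assume the Jacobian of f has rank m−d at every point of M and the Jacobian of g has rank n−e at every point of N. Let Π^M_P : ℝ^m → ℝ^p, Π^P_U : ℝ^p → ℝ^d, Π^N_P : ℝ^n → ℝ^p, and Π^N_V : ℝ^n → ℝ^e be coordinate projections such that: Π^M_U := Π^P_U ∘ Π^M_P is a good direction for M; Π^N_V is a good direction for N; and Π^N_P(N) ⊆ P := Π^M_P(M). Set Π^N_U := Π^P_U ∘ Π^N_P and M×_P N := {(x,y) ∈ M×N : Π^M_P(x) = Π^N_P(y)}. Then: (i) M×_P N = {(x,y) ∈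 U_X×U_Y : f(x) = 0, g(y) = 0, and Π^M_U(x) − Π^N_U(y) = 0}; (ii) the Jacobian of the map (x,y) ↦ (f(x), g(y), Π^M_U(x) − Π^N_U(y)) from U_X×U_Y to ℝ^{m+n−e} has rank m+n−e at every point of M×_P N; (iii) the map (x,y) ↦ Π^N_V(y), a coordinate projection ℝ^{m+n} → ℝ^e, is a good direction for M×_P N; and (iv) the natural projection (x,y) ↦ y is a bijection from M×_P N onto N. -/
/-- The coordinate projection `Π_λ : ℝⁿ → ℝᵏ` determined by an index map `λ : Fin k → Fin n`. -/
def cproj {k n : ℕ} (lam : Fin k → Fin n) (x : Fin n → ℝ) : Fin k → ℝ :=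
  fun i => x (lam i)

/-!
Since `Π^N_P(N) ⊆ Π^M_P(M)` and `Π^M_U = Π^P_U ∘ Π^M_P` is injective on `M`, the condition
`Π^M_P x = Π^N_P y` for `x ∈ M`, `y ∈ N` is equivalent to `Π^M_U x = Π^N_U y`, and the fiber
product is the graph over `N` of `y ↦ F (Π^N_U y)`, where `F` is the analytic inverse of `Π^M_U`
on `M`. This gives (i), (iii) and (iv). For (ii), differentiating `Π^M_U ∘ F = id` and `f ∘ F = 0`
near `Π^M_U x` yields a right inverse `ψ` of `Π^M_U` on which `Df` vanishes; with `Df` and `Dg`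
surjective, `(Df u, Dg v, Π^M_U u - Π^N_U v) = (a, b, c)` can then be solved for any `(a, b, c)`.
-/

open Set Function Module

noncomputable def cprojL {k n : ℕ} (lam : Fin k → Fin n) : (Fin n → ℝ) →L[ℝ] (Fin k → ℝ) :=
  ContinuousLinearMap.pi fun i => ContinuousLinearMap.proj (lam i)

def fiberProd {X Y P : Type*} (M : Set X) (N : Set Y) (a : X → P) (b : Y → P) : Set (X × Y) :=
  {q | q.1 ∈ M ∧ q.2 ∈ N ∧ a q.1 = b q.2}

section FiberProd

variable {X Y P U : Type*} {M : Set X} {N : Set Y} {a : X → P} {b : Y → P}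

theorem eq_iff_comp_eq_of_image_subset {r : P → U} (hra : InjOn (r ∘ a) M)
    (hba : b '' N ⊆ a '' M) {x : X} (hx : x ∈ M) {y : Y} (hy : y ∈ N) :
    a x = b y ↔ r (a x) = r (b y) := by
  refine ⟨congrArg r, fun h => ?_⟩
  obtain ⟨x', hx', hx'y⟩ := hba (mem_image_of_mem b hy)
  rw [← hx'y, hra hx' hx (by simp only [comp_apply, hx'y, h])]

theorem bijOn_snd_fiberProd (ha : InjOn a M) (hba : b '' N ⊆ a '' M) :
    BijOn Prod.snd (fiberProd M N a b) N := by
  refine ⟨fun q hq => hq.2.1, ?_, fun y hy => ?_⟩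
  · rintro ⟨x, y⟩ ⟨hx, -, hxy⟩ ⟨x', y'⟩ ⟨hx', -, hxy'⟩ (rfl : y = y')
    exact Prod.ext (ha hx hx' (hxy.trans hxy'.symm)) rfl
  · obtain ⟨x, hx, hxy⟩ := hba (mem_image_of_mem b hy)
    exact ⟨(x, y), ⟨hx, hy, hxy⟩, rfl⟩

end FiberProd

section GoodDirection

variable {X Y : Type*} [NormedAddCommGroup X] [NormedSpace ℝ X] [NormedAddCommGroup Y]
  [NormedSpace ℝ Y] {d e : ℕ}

theorem IsGoodDirection.snd_of_bijOn {πM : X → Fin d → ℝ} {πN : Y → Fin e → ℝ} {M : Set X}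
    {N : Set Y} (hM : IsGoodDirection πM M) (hN : IsGoodDirection πN N) {S : Set (X × Y)}
    (hS : BijOn Prod.snd S N) (hSM : ∀ q ∈ S, q.1 ∈ M) (κ : Y →L[ℝ] (Fin d → ℝ))
    (hκ : ∀ q ∈ S, πM q.1 = κ q.2) :
    IsGoodDirection (fun q : X × Y => πN q.2) S := by
  obtain ⟨-, -, F, hFan, hF⟩ := hM
  obtain ⟨hNopen, hNinj, G, hGan, hG⟩ := hN
  have himage : (fun q : X × Y => πN q.2) '' S = πN '' N := by
    rw [← hS.image_eq, image_image]
  refine ⟨himage ▸ hNopen, hNinj.comp hS.injOn hS.mapsTo,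
    fun w => (F (κ (G w)), G w), ?_, fun q hq => ?_⟩
  · rw [himage]
    rintro _ ⟨y, hy, rfl⟩
    obtain ⟨q, hq, rfl⟩ := hS.surjOn hy
    have hGa : AnalyticAt ℝ G (πN q.2) := hGan _ (mem_image_of_mem _ hy)
    have hκG : AnalyticAt ℝ (fun w => κ (G w)) (πN q.2) := (κ.analyticAt _).comp hGa
    have hFκ : AnalyticAt ℝ F (κ (G (πN q.2))) := by
      rw [hG _ hy, ← hκ q hq]
      exact hFan _ (mem_image_of_mem _ (hSM q hq))
    exact (AnalyticAt.comp (f := fun w => κ (G w)) hFκ hκG).prod hGa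
  · simp only [hG _ (hS.mapsTo hq), ← hκ q hq, hF _ (hSM q hq)]

theorem IsGoodDirection.exists_rightInverse_fderiv {Z : Type*} [NormedAddCommGroup Z]
    [NormedSpace ℝ Z] {π : X →L[ℝ] (Fin d → ℝ)} {M : Set X} (hπ : IsGoodDirection π M)
    {f : X → Z} (hfM : ∀ x ∈ M, f x = 0) {x : X} (hx : x ∈ M) (hf : DifferentiableAt ℝ f x) :
    ∃ ψ : (Fin d → ℝ) →L[ℝ] X, (∀ w, π (ψ w) = w) ∧ ∀ w, fderiv ℝ f x (ψ w) = 0 := by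
  obtain ⟨hopen, -, F, hFan, hF⟩ := hπ
  have hπx : π x ∈ π '' M := mem_image_of_mem π hx
  have hFd : HasFDerivAt F (fderiv ℝ F (π x)) (π x) := (hFan _ hπx).differentiableAt.hasFDerivAt
  have hFx : F (π x) = x := hF x hx
  have hnear : ∀ᶠ w in nhds (π x), F w ∈ M ∧ π (F w) = w := by
    filter_upwards [hopen.mem_nhds hπx] with _ ⟨z, hz, hzw⟩
    rw [← hzw, hF z hz]
    exact ⟨hz, rfl⟩
  refine ⟨fderiv ℝ F (π x), fun w => ?_, fun w => ?_⟩
  · have hπF : HasFDerivAt (fun w => π (F w)) (π.comp (fderiv ℝ F (π x))) (π x) :=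
      π.hasFDerivAt.comp _ hFd
    have hid : HasFDerivAt (fun w => π (F w)) (ContinuousLinearMap.id ℝ _) (π x) :=
      (hasFDerivAt_id _).congr_of_eventuallyEq (hnear.mono fun _ h => h.2)
    exact congrArg (· w) (hπF.unique hid)
  · have hfd : HasFDerivAt f (fderiv ℝ f x) (F (π x)) := by
      rw [hFx]
      exact hf.hasFDerivAt
    have hfF : HasFDerivAt (fun w => f (F w)) ((fderiv ℝ f x).comp (fderiv ℝ F (π x))) (π x) :=
      hfd.comp _ hFd
    have hzero : HasFDerivAt (fun w => f (F w)) 0 (π x) :=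
      (hasFDerivAt_const (𝕜 := ℝ) (0 : Z) _).congr_of_eventuallyEq
        (hnear.mono fun _ h => hfM _ h.1)
    exact congrArg (· w) (hfF.unique hzero)

end GoodDirection

section LinearAlgebra

variable {R X Y A B C : Type*} [Ring R] [AddCommGroup X] [Module R X] [AddCommGroup Y]
  [Module R Y] [AddCommGroup A] [Module R A] [AddCommGroup B] [Module R B] [AddCommGroup C]
  [Module R C]

theorem LinearMap.surjective_prod_sub_of_rightInverse {L₁ : X →ₗ[R] A} {L₂ : Y →ₗ[R] B}
    {π₁ : X →ₗ[R] C} (π₂ : Y →ₗ[R] C) {ψ : C →ₗ[R] X} (hL₁ : Surjective L₁)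
    (hL₂ : Surjective L₂) (hπψ : ∀ w, π₁ (ψ w) = w) (hLψ : ∀ w, L₁ (ψ w) = 0) :
    Surjective fun uv : X × Y => (L₁ uv.1, L₂ uv.2, π₁ uv.1 - π₂ uv.2) := by
  rintro ⟨a, b, c⟩
  obtain ⟨u, rfl⟩ := hL₁ a
  obtain ⟨v, rfl⟩ := hL₂ b
  refine ⟨(u + ψ (c + π₂ v - π₁ u), v), ?_⟩
  simp only [map_add, hLψ, hπψ, add_zero]
  abel_nf

end LinearAlgebra

theorem Matrix.rank_of_eq_card_iff_surjective {K X ι κ : Type*} [Field K] [TopologicalSpace K]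
    [AddCommGroup X] [Module K X] [TopologicalSpace X] [Fintype ι] [Fintype κ] [DecidableEq κ]
    (D : ι → X →L[K] K) (T : (κ → K) →ₗ[K] X) {E : κ → X} (hE : ∀ c, T (Pi.single c 1) = E c) :
    (Matrix.of fun i c => D i (E c)).rank = Fintype.card ι ↔
      Surjective fun w i => D i (T w) := by
  have hmat : (Matrix.of fun i c => D i (E c))
      = LinearMap.toMatrix' (LinearMap.pi (fun i => (D i : X →ₗ[K] K)) ∘ₗ T) := by
    ext i c
    simp [hE]
  rw [hmat, Matrix.rank, ← Matrix.toLin'_apply', Matrix.toLin'_toMatrix',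
    ← finrank_fintype_fun_eq_card (R := K), ← Submodule.eq_top_iff_finrank_eq,
    LinearMap.range_eq_top]
  rfl

section Jacobian

variable {X Y : Type*} [NormedAddCommGroup X] [NormedSpace ℝ X] [NormedAddCommGroup Y]
  [NormedSpace ℝ Y] {ι : Type*} [Fintype ι]

theorem DifferentiableAt.rank_jacobian_eq_card_iff {κ : Type*} [Fintype κ] [DecidableEq κ]
    {Φ : (κ → ℝ) → ι → ℝ} {x : κ → ℝ} (hΦ : DifferentiableAt ℝ Φ x) :
    (Matrix.of fun i j => fderiv ℝ (fun z => Φ z i) x (Pi.single j 1)).rank = Fintype.card ι ↔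
      Surjective (fderiv ℝ Φ x) := by
  rw [Matrix.rank_of_eq_card_iff_surjective _ LinearMap.id (E := fun j => Pi.single j 1)
    fun _ => rfl]
  simp only [fderiv_apply hΦ, LinearMap.id_apply]
  rfl

theorem fderiv_apply_comp_clm {Φ : X → ι → ℝ} (L : Y →L[ℝ] X) {y : Y}
    (hΦ : DifferentiableAt ℝ Φ (L y)) (i : ι) (v : Y) :
    fderiv ℝ (fun z => Φ (L z) i) y v = fderiv ℝ Φ (L y) (L v) i :=
  congrArg (· v) (hasFDerivAt_pi'.1 (hΦ.hasFDerivAt.comp y L.hasFDerivAt) i).fderiv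

end Jacobian

theorem rank_jacobian_fiberEquations {m n a b d : ℕ} {f : (Fin m → ℝ) → Fin a → ℝ}
    {g : (Fin n → ℝ) → Fin b → ℝ} (lM : Fin d → Fin m) (lN : Fin d → Fin n)
    {q : (Fin m → ℝ) × (Fin n → ℝ)} (hf : DifferentiableAt ℝ f q.1)
    (hg : DifferentiableAt ℝ g q.2) (hfs : Surjective (fderiv ℝ f q.1))
    (hgs : Surjective (fderiv ℝ g q.2)) {ψ : (Fin d → ℝ) →L[ℝ] (Fin m → ℝ)}
    (hπψ : ∀ w, cproj lM (ψ w) = w) (hfψ : ∀ w, fderiv ℝ f q.1 (ψ w) = 0) :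
    (Matrix.of fun (i : Fin a ⊕ Fin b ⊕ Fin d) (c : Fin m ⊕ Fin n) =>
      fderiv ℝ
        (fun q' : (Fin m → ℝ) × (Fin n → ℝ) =>
          Sum.elim (fun i₁ => f q'.1 i₁)
            (Sum.elim (fun i₂ => g q'.2 i₂) (fun i₃ => q'.1 (lM i₃) - q'.2 (lN i₃))) i)
        q
        (Sum.elim (fun j₁ => ((Pi.single j₁ 1 : Fin m → ℝ), (0 : Fin n → ℝ)))
          (fun j₂ => ((0 : Fin m → ℝ), (Pi.single j₂ 1 : Fin n → ℝ))) c)).rank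
      = a + (b + d) := by
  let e := LinearEquiv.sumArrowLequivProdArrow (Fin m) (Fin n) ℝ ℝ
  have he : ∀ c, e (Pi.single c 1) = Sum.elim (fun j₁ => (Pi.single j₁ 1, 0))
      (fun j₂ => (0, Pi.single j₂ 1)) c := by
    rintro (j | j) <;> ext k <;> simp [e, Pi.single_apply]
  have hrow₁ : ∀ i v, fderiv ℝ (fun q' : (Fin m → ℝ) × (Fin n → ℝ) => f q'.1 i) q v
      = fderiv ℝ f q.1 v.1 i :=
    fderiv_apply_comp_clm (Φ := f) (ContinuousLinearMap.fst ℝ _ _) (y := q) hf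
  have hrow₂ : ∀ i v, fderiv ℝ (fun q' : (Fin m → ℝ) × (Fin n → ℝ) => g q'.2 i) q v
      = fderiv ℝ g q.2 v.2 i :=
    fderiv_apply_comp_clm (Φ := g) (ContinuousLinearMap.snd ℝ _ _) (y := q) hg
  have hrow₃ : ∀ i v, fderiv ℝ (fun q' : (Fin m → ℝ) × (Fin n → ℝ) => q'.1 (lM i) - q'.2 (lN i))
      q v = v.1 (lM i) - v.2 (lN i) := by
    intro i v
    let C : (Fin m → ℝ) × (Fin n → ℝ) →L[ℝ] ℝ :=
      (ContinuousLinearMap.proj (R := ℝ) (φ := fun _ : Fin m => ℝ) (lM i)).comp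
          (ContinuousLinearMap.fst ℝ _ _) -
        (ContinuousLinearMap.proj (R := ℝ) (φ := fun _ : Fin n => ℝ) (lN i)).comp
          (ContinuousLinearMap.snd ℝ _ _)
    exact congrArg (· v) (C.hasFDerivAt (x := q)).fderiv
  have hcard : a + (b + d) = Fintype.card (Fin a ⊕ Fin b ⊕ Fin d) := by simp
  rw [hcard, Matrix.rank_of_eq_card_iff_surjective _ (e : _ →ₗ[ℝ] _) he]
  intro h
  obtain ⟨⟨u, v⟩, huv⟩ := LinearMap.surjective_prod_sub_of_rightInverse
    (L₁ := (fderiv ℝ f q.1).toLinearMap) (L₂ := (fderiv ℝ g q.2).toLinearMap)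
    (π₁ := (cprojL lM).toLinearMap) (cprojL lN).toLinearMap (ψ := ψ.toLinearMap) hfs hgs hπψ hfψ
    (h ∘ Sum.inl, h ∘ Sum.inr ∘ Sum.inl, h ∘ Sum.inr ∘ Sum.inr)
  simp only [Prod.mk.injEq] at huv
  obtain ⟨hu, hv, huv⟩ := huv
  refine ⟨e.symm (u, v), funext ?_⟩
  rintro (i | i | i)
  · simpa [hrow₁] using congrFun hu i
  · simpa [hrow₂] using congrFun hv i
  · simpa [hrow₃, cprojL] using congrFun huv i

theorem stmt19_general {m n p d e : ℕ} (hdp : d ≤ p) (hpm : p ≤ m) (hen : e ≤ n)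
    (UX : Set (Fin m → ℝ)) (UY : Set (Fin n → ℝ))
    (f : (Fin m → ℝ) → Fin (m - d) → ℝ) (g : (Fin n → ℝ) → Fin (n - e) → ℝ)
    (hf : ∀ x ∈ UX, AnalyticAt ℝ f x) (hg : ∀ y ∈ UY, AnalyticAt ℝ g y)
    (hfRank : ∀ x ∈ {x ∈ UX | f x = 0},
      (Matrix.of fun (i : Fin (m - d)) (j : Fin m) =>
        fderiv ℝ (fun z => f z i) x (Pi.single j 1)).rank = m - d)
    (hgRank : ∀ y ∈ {y ∈ UY | g y = 0},
      (Matrix.of fun (i : Fin (n - e)) (j : Fin n) =>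
        fderiv ℝ (fun z => g z i) y (Pi.single j 1)).rank = n - e)
    (lMP : Fin p → Fin m) (lPU : Fin d → Fin p) (lNP : Fin p → Fin n) (lNV : Fin e → Fin n)
    (hMU : IsGoodDirection (cproj (lMP ∘ lPU)) {x ∈ UX | f x = 0})
    (hNV : IsGoodDirection (cproj lNV) {y ∈ UY | g y = 0})
    (hNP : cproj lNP '' {y ∈ UY | g y = 0} ⊆ cproj lMP '' {x ∈ UX | f x = 0}) :
    ({q : (Fin m → ℝ) × (Fin n → ℝ) |
        q.1 ∈ {x ∈ UX | f x = 0} ∧ q.2 ∈ {y ∈ UY | g y = 0} ∧ cproj lMP q.1 = cproj lNP q.2}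
      = {q : (Fin m → ℝ) × (Fin n → ℝ) |
          q.1 ∈ UX ∧ q.2 ∈ UY ∧ f q.1 = 0 ∧ g q.2 = 0 ∧
            cproj (lMP ∘ lPU) q.1 - cproj (lNP ∘ lPU) q.2 = 0})
    ∧ (∀ q ∈ {q : (Fin m → ℝ) × (Fin n → ℝ) |
        q.1 ∈ {x ∈ UX | f x = 0} ∧ q.2 ∈ {y ∈ UY | g y = 0} ∧ cproj lMP q.1 = cproj lNP q.2},
        (Matrix.of fun (i : Fin (m - d) ⊕ Fin (n - e) ⊕ Fin d) (c : Fin m ⊕ Fin n) =>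
          fderiv ℝ
            (fun q' : (Fin m → ℝ) × (Fin n → ℝ) =>
              Sum.elim (fun i₁ => f q'.1 i₁)
                (Sum.elim (fun i₂ => g q'.2 i₂)
                  (fun i₃ => q'.1 (lMP (lPU i₃)) - q'.2 (lNP (lPU i₃)))) i)
            q
            (Sum.elim (fun j₁ => ((Pi.single j₁ 1 : Fin m → ℝ), (0 : Fin n → ℝ)))
              (fun j₂ => ((0 : Fin m → ℝ), (Pi.single j₂ 1 : Fin n → ℝ))) c)).rank
          = m + n - e)
    ∧ IsGoodDirection (fun q : (Fin m → ℝ) × (Fin n → ℝ) => cproj lNV q.2)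
        {q : (Fin m → ℝ) × (Fin n → ℝ) |
          q.1 ∈ {x ∈ UX | f x = 0} ∧ q.2 ∈ {y ∈ UY | g y = 0} ∧ cproj lMP q.1 = cproj lNP q.2}
    ∧ Set.BijOn (fun q : (Fin m → ℝ) × (Fin n → ℝ) => q.2)
        {q : (Fin m → ℝ) × (Fin n → ℝ) |
          q.1 ∈ {x ∈ UX | f x = 0} ∧ q.2 ∈ {y ∈ UY | g y = 0} ∧ cproj lMP q.1 = cproj lNP q.2}
        {y ∈ UY | g y = 0} := by
  have hMP : InjOn (cproj lMP) {x ∈ UX | f x = 0} := InjOn.of_comp (g := cproj lPU) hMU.2.1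
  have hbij := bijOn_snd_fiberProd hMP hNP
  refine ⟨?_, ?_, ?_, hbij⟩
  · ext ⟨x, y⟩
    constructor
    · rintro ⟨⟨hx, hfx⟩, ⟨hy, hgy⟩, hxy⟩
      exact ⟨hx, hy, hfx, hgy, sub_eq_zero.2 (congrArg (cproj lPU) hxy)⟩
    · rintro ⟨hx, hy, hfx, hgy, hxy⟩
      exact ⟨⟨hx, hfx⟩, ⟨hy, hgy⟩, (eq_iff_comp_eq_of_image_subset (a := cproj lMP)
        (r := cproj lPU) hMU.2.1 hNP ⟨hx, hfx⟩ ⟨hy, hgy⟩).2 (sub_eq_zero.1 hxy)⟩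
  · rintro q ⟨hq₁, hq₂, -⟩
    have hfd : DifferentiableAt ℝ f q.1 := (hf q.1 hq₁.1).differentiableAt
    have hgd : DifferentiableAt ℝ g q.2 := (hg q.2 hq₂.1).differentiableAt
    have hfs := hfd.rank_jacobian_eq_card_iff.1 (by rw [Fintype.card_fin]; exact hfRank q.1 hq₁)
    have hgs := hgd.rank_jacobian_eq_card_iff.1 (by rw [Fintype.card_fin]; exact hgRank q.2 hq₂)
    obtain ⟨ψ, hπψ, hfψ⟩ := IsGoodDirection.exists_rightInverse_fderiv (π := cprojL (lMP ∘ lPU))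
      hMU (fun x hx => hx.2) hq₁ hfd
    exact (rank_jacobian_fiberEquations (lMP ∘ lPU) (lNP ∘ lPU) hfd hgd hfs hgs hπψ hfψ).trans
      (by omega)
  · exact hMU.snd_of_bijOn hNV hbij (fun q hq => hq.1) (cprojL (lNP ∘ lPU))
      fun q hq => congrArg (cproj lPU) hq.2.2

/-- **Fiber Product Lemma.**  With `M ⊆ ℝᵐ` and `N ⊆ ℝⁿ` nonsingularly defined by the
real-analytic maps `f : U_X → ℝ^{m−d}` and `g : U_Y → ℝ^{n−e}`, coordinate projections
`Π^M_P : ℝᵐ → ℝᵖ`, `Π^P_U : ℝᵖ → ℝ^d`, `Π^N_P : ℝⁿ → ℝᵖ`, `Π^N_V : ℝⁿ → ℝᵉ` such that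
`Π^M_U = Π^P_U∘Π^M_P` is a good direction for `M`, `Π^N_V` is a good direction for `N`,
and `Π^N_P(N) ⊆ P = Π^M_P(M)`, the fiber product
`M×_P N = {(x,y) ∈ M×N : Π^M_P(x) = Π^N_P(y)}` satisfies:
(i) it equals `{(x,y) ∈ U_X×U_Y : f(x)=0, g(y)=0, Π^M_U(x) − Π^N_U(y) = 0}`;
(ii) the Jacobian of `(x,y) ↦ (f(x), g(y), Π^M_U(x)−Π^N_U(y))` has rank `m+n−e` at each of
its points; (iii) `(x,y) ↦ Π^N_V(y)` is a good direction for it; and (iv) `(x,y) ↦ y` maps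
it bijectively onto `N`. -/
theorem stmt19 {m n p d e : ℕ} (hdp : d ≤ p) (hpm : p ≤ m) (hpn : p ≤ n) (hen : e ≤ n)
    (UX : Set (Fin m → ℝ)) (hUX : IsOpen UX) (UY : Set (Fin n → ℝ)) (hUY : IsOpen UY)
    (f : (Fin m → ℝ) → Fin (m - d) → ℝ) (g : (Fin n → ℝ) → Fin (n - e) → ℝ)
    (hf : ∀ x ∈ UX, AnalyticAt ℝ f x) (hg : ∀ y ∈ UY, AnalyticAt ℝ g y)
    (hfRank : ∀ x ∈ {x ∈ UX | f x = 0},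
      (Matrix.of fun (i : Fin (m - d)) (j : Fin m) =>
        fderiv ℝ (fun z => f z i) x (Pi.single j 1)).rank = m - d)
    (hgRank : ∀ y ∈ {y ∈ UY | g y = 0},
      (Matrix.of fun (i : Fin (n - e)) (j : Fin n) =>
        fderiv ℝ (fun z => g z i) y (Pi.single j 1)).rank = n - e)
    (lMP : Fin p → Fin m) (hlMP : Function.Injective lMP)
    (lPU : Fin d → Fin p) (hlPU : Function.Injective lPU)
    (lNP : Fin p → Fin n) (hlNP : Function.Injective lNP)
    (lNV : Fin e → Fin n) (hlNV : Function.Injective lNV)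
    (hMU : IsGoodDirection (cproj (lMP ∘ lPU)) {x ∈ UX | f x = 0})
    (hNV : IsGoodDirection (cproj lNV) {y ∈ UY | g y = 0})
    (hNP : cproj lNP '' {y ∈ UY | g y = 0} ⊆ cproj lMP '' {x ∈ UX | f x = 0}) :
    ({q : (Fin m → ℝ) × (Fin n → ℝ) |
        q.1 ∈ {x ∈ UX | f x = 0} ∧ q.2 ∈ {y ∈ UY | g y = 0} ∧ cproj lMP q.1 = cproj lNP q.2}
      = {q : (Fin m → ℝ) × (Fin n → ℝ) |
          q.1 ∈ UX ∧ q.2 ∈ UY ∧ f q.1 = 0 ∧ g q.2 = 0 ∧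
            cproj (lMP ∘ lPU) q.1 - cproj (lNP ∘ lPU) q.2 = 0})
    ∧ (∀ q ∈ {q : (Fin m → ℝ) × (Fin n → ℝ) |
        q.1 ∈ {x ∈ UX | f x = 0} ∧ q.2 ∈ {y ∈ UY | g y = 0} ∧ cproj lMP q.1 = cproj lNP q.2},
        (Matrix.of fun (i : Fin (m - d) ⊕ Fin (n - e) ⊕ Fin d) (c : Fin m ⊕ Fin n) =>
          fderiv ℝ
            (fun q' : (Fin m → ℝ) × (Fin n → ℝ) =>
              Sum.elim (fun i₁ => f q'.1 i₁)
                (Sum.elim (fun i₂ => g q'.2 i₂)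
                  (fun i₃ => q'.1 (lMP (lPU i₃)) - q'.2 (lNP (lPU i₃)))) i)
            q
            (Sum.elim (fun j₁ => ((Pi.single j₁ 1 : Fin m → ℝ), (0 : Fin n → ℝ)))
              (fun j₂ => ((0 : Fin m → ℝ), (Pi.single j₂ 1 : Fin n → ℝ))) c)).rank
          = m + n - e)
    ∧ IsGoodDirection (fun q : (Fin m → ℝ) × (Fin n → ℝ) => cproj lNV q.2)
        {q : (Fin m → ℝ) × (Fin n → ℝ) |
          q.1 ∈ {x ∈ UX | f x = 0} ∧ q.2 ∈ {y ∈ UY | g y = 0} ∧ cproj lMP q.1 = cproj lNP q.2}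
    ∧ Set.BijOn (fun q : (Fin m → ℝ) × (Fin n → ℝ) => q.2)
        {q : (Fin m → ℝ) × (Fin n → ℝ) |
          q.1 ∈ {x ∈ UX | f x = 0} ∧ q.2 ∈ {y ∈ UY | g y = 0} ∧ cproj lMP q.1 = cproj lNP q.2}
        {y ∈ UY | g y = 0} :=
  stmt19_general hdp hpm hen UX UY f g hf hg hfRank hgRank lMP lPU lNP lNV hMU hNV hNP
end
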